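/- arXiv:2601.12737 — 5 statements merged into one kernel-verified Lean document; each statement's English description precedes it below -/
import Mathlib

section
/- Let (ν_n)_{n≥1} be a non-decreasing sequence of positive integers with liminf_{n→∞} ν_n/n = ∞. Then the Hausdorff dimension of F((ν_n)) equals 0. -/
/-!
A point of `Fset ν` has, for infinitely many `n`, partial quotients `a, a + d, …, a + (ν n - 1) d`
at positions `n, …, n + ν n - 1`, and since its partial quotients increase, the `n - 1` before
them are smaller than `a`. The points with given `n, a, d` and given prefix lie in a
continued-fraction cylinder of diameter at most `∏ (a + j d)⁻² ≤ (a d)^-(ν n - 1)`, because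
`(a + j d)² ≥ a d`. Once `ν n > 2 k n`, the `1/k`-th powers of these diameters are at most
`(a d)^-(2n)`, and summing over the at most `a ^ (n - 1)` prefixes leaves `a^-(n+1) d^-(2n)`,
which is summable over `n ≥ 1`, `a ≥ 2`, `d ≥ 1`. Hence `μH[1/k] (Fset ν) < ∞` for every `k ≥ 1`.
-/

open Filter MeasureTheory Set
open scoped ENNReal NNReal Topology

/-- The Gauss map `T(x) = 1/x - ⌊1/x⌋`. -/
noncomputable def gaussMap (x : ℝ) : ℝ := 1 / x - ⌊1 / x⌋

/-- The `n`-th partial quotient `a_n(x) = ⌊1 / T^{n-1} x⌋` of the regular continued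
fraction expansion of `x` (meaningful for `n ≥ 1` and `x` irrational in `(0,1)`). -/
noncomputable def pq (x : ℝ) (n : ℕ) : ℕ := (⌊1 / (gaussMap^[n - 1] x)⌋).toNat

/-- The set `J` of irrationals in `(0,1)` with strictly increasing partial quotients. -/
def Jset : Set ℝ :=
  {x | x ∈ Set.Ioo (0 : ℝ) 1 ∧ Irrational x ∧ ∀ n : ℕ, 1 ≤ n → pq x n < pq x (n + 1)}

/-- The finite sequence `b start, b (start+1), …, b (start+len-1)` is an
arithmetic progression. -/
def IsAPAt (b : ℕ → ℕ) (start len : ℕ) : Prop :=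
  ∃ d : ℤ, ∀ i : ℕ, i + 2 ≤ len → (b (start + i + 1) : ℤ) - (b (start + i) : ℤ) = d

/-- The `F`-set: points of `J` such that for infinitely many `n ≥ 1` the partial
quotients `a_n(x), …, a_{n+ν_n-1}(x)` form an arithmetic progression. -/
def Fset (ν : ℕ → ℕ) : Set ℝ :=
  {x | x ∈ Jset ∧ ∀ N : ℕ, ∃ n : ℕ, N ≤ n ∧ 1 ≤ n ∧ IsAPAt (pq x) n (ν n)}

/-- The `G`-set: points of `J` such that for all sufficiently large `n` the partial
quotients `a_{σ_n}(x), …, a_{σ_n+n-1}(x)` form an arithmetic progression. -/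
def Gset (σ : ℕ → ℕ) : Set ℝ :=
  {x | x ∈ Jset ∧ ∃ N : ℕ, ∀ n : ℕ, N ≤ n → IsAPAt (pq x) (σ n) n}

theorem Irrational.gaussMap {x : ℝ} (hx : Irrational x) : Irrational (gaussMap x) :=
  (one_div x ▸ hx.inv).sub_intCast ⌊1 / x⌋

theorem gaussMap_nonneg (x : ℝ) : 0 ≤ gaussMap x := Int.fract_nonneg _

theorem gaussMap_mem_Ioo {x : ℝ} (hx : Irrational x) : gaussMap x ∈ Ioo 0 1 := by
  refine ⟨(gaussMap_nonneg x).lt_of_ne fun h => hx.gaussMap ⟨0, ?_⟩, Int.fract_lt_one (1 / x)⟩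
  rw [Rat.cast_zero, h]

theorem one_le_floor_one_div {x : ℝ} (hx : x ∈ Ioo 0 1) : 1 ≤ ⌊1 / x⌋ :=
  Int.le_floor.mpr (by simpa using (one_le_div hx.1).mpr hx.2.le)

theorem pq_succ_succ (x : ℝ) (i : ℕ) : pq x (i + 2) = pq (gaussMap x) (i + 1) := by
  simp [pq, Function.iterate_succ_apply]

theorem pq_one_eq_floor {x : ℝ} (hx : x ∈ Ioo 0 1) : ((pq x 1 : ℤ) : ℝ) = ⌊1 / x⌋ := by
  have h := one_le_floor_one_div hx
  rw [pq, Nat.sub_self, Function.iterate_zero_apply, Int.toNat_of_nonneg (by omega)]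

theorem inv_eq_pq_one_add_gaussMap {x : ℝ} (hx : x ∈ Ioo 0 1) :
    x⁻¹ = pq x 1 + gaussMap x := by
  rw [gaussMap, ← Int.cast_natCast, pq_one_eq_floor hx]
  ring

theorem one_le_pq_one {x : ℝ} (hx : x ∈ Ioo 0 1) : 1 ≤ pq x 1 := by
  have := one_le_floor_one_div hx
  simp only [pq, Nat.sub_self, Function.iterate_zero_apply]
  omega

theorem one_le_pq {x : ℝ} (hx : x ∈ Ioo 0 1) (hirr : Irrational x) (i : ℕ) : 1 ≤ pq x (i + 1) := by
  induction i generalizing x with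
  | zero => exact one_le_pq_one hx
  | succ i ih => exact pq_succ_succ x i ▸ ih (gaussMap_mem_Ioo hirr) hirr.gaussMap

theorem abs_inv_add_sub_inv_add_le {a u v : ℝ} (ha : 0 < a) (hu : 0 ≤ u) (hv : 0 ≤ v) :
    |(a + u)⁻¹ - (a + v)⁻¹| ≤ (a ^ 2)⁻¹ * |u - v| := by
  have hX : 0 < a + u := by linarith
  have hY : 0 < a + v := by linarith
  rw [inv_sub_inv hX.ne' hY.ne', abs_div, abs_of_pos (mul_pos hX hY), add_sub_add_left_eq_sub,
    abs_sub_comm, div_eq_inv_mul]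
  gcongr
  nlinarith

theorem abs_sub_le_of_pq_one_eq {x y : ℝ} (hx : x ∈ Ioo 0 1) (hy : y ∈ Ioo 0 1)
    (h : pq x 1 = pq y 1) :
    |x - y| ≤ ((pq x 1 : ℝ) ^ 2)⁻¹ * |gaussMap x - gaussMap y| := by
  have key := abs_inv_add_sub_inv_add_le (a := pq x 1) (by exact_mod_cast one_le_pq_one hx)
    (gaussMap_nonneg x) (gaussMap_nonneg y)
  rwa [← inv_eq_pq_one_add_gaussMap hx, h, ← inv_eq_pq_one_add_gaussMap hy, inv_inv, inv_inv,
    ← h] at key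

theorem abs_sub_le_prod_of_pq_eq (m : ℕ) {x y : ℝ} (hx : x ∈ Ioo 0 1) (hxi : Irrational x)
    (hy : y ∈ Ioo 0 1) (hyi : Irrational y) (h : ∀ i < m, pq x (i + 1) = pq y (i + 1)) :
    |x - y| ≤ ∏ i ∈ Finset.range m, ((pq x (i + 1) : ℝ) ^ 2)⁻¹ := by
  induction m generalizing x y with
  | zero =>
    rw [Finset.prod_range_zero, abs_sub_le_iff]
    constructor <;> linarith [hx.1, hx.2, hy.1, hy.2]
  | succ m ih =>
    have htail := ih (gaussMap_mem_Ioo hxi) hxi.gaussMap (gaussMap_mem_Ioo hyi) hyi.gaussMap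
      fun i hi => by simpa only [pq_succ_succ] using h (i + 1) (by omega)
    calc |x - y| ≤ ((pq x 1 : ℝ) ^ 2)⁻¹ * |gaussMap x - gaussMap y| :=
          abs_sub_le_of_pq_one_eq hx hy (h 0 m.succ_pos)
      _ ≤ ((pq x 1 : ℝ) ^ 2)⁻¹ *
            ∏ i ∈ Finset.range m, ((pq (gaussMap x) (i + 1) : ℝ) ^ 2)⁻¹ := by gcongr
      _ = ∏ i ∈ Finset.range (m + 1), ((pq x (i + 1) : ℝ) ^ 2)⁻¹ := by
          simp only [Finset.prod_range_succ', pq_succ_succ, mul_comm]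

theorem strictMono_pq_of_mem_Jset {x : ℝ} (hx : x ∈ Jset) : StrictMono fun i => pq x (i + 1) :=
  strictMono_nat_of_lt_succ fun i => hx.2.2 (i + 1) (Nat.le_add_left 1 i)

theorem pq_lt_pq_of_mem_Jset {x : ℝ} (hx : x ∈ Jset) {i n : ℕ} (h : i < n - 1) :
    pq x (i + 1) < pq x n := by
  simpa [Nat.sub_add_cancel (by omega : 1 ≤ n)] using strictMono_pq_of_mem_Jset hx h

theorem IsAPAt.eq_add_mul {b : ℕ → ℕ} {s len : ℕ} (h : IsAPAt b s len) (hs : b s ≤ b (s + 1))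
    {j : ℕ} (hj : j < len) : b (s + j) = b s + j * (b (s + 1) - b s) := by
  obtain ⟨d, hd⟩ := h
  induction j with
  | zero => simp
  | succ j ih =>
    have h0 := hd 0 (by omega)
    rw [add_zero] at h0
    have hstep : (b (s + j + 1) : ℤ) = b (s + j) + (b (s + 1) - b s) := by
      linarith [hd j (by omega)]
    zify [hs] at ih ⊢
    rw [← add_assoc, hstep, ih (by omega)]
    ring

theorem ENNReal.pow_rpow_inv_natCast_le {q : ℝ≥0∞} (hq : q ≤ 1) {k j L : ℕ} (hk : k ≠ 0)
    (h : k * j ≤ L) : (q ^ L) ^ (k⁻¹ : ℝ) ≤ q ^ j :=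
  calc (q ^ L) ^ (k⁻¹ : ℝ) ≤ ((q ^ j) ^ k) ^ (k⁻¹ : ℝ) := by
        rw [← pow_mul, mul_comm]
        exact ENNReal.rpow_le_rpow (pow_le_pow_right_of_le_one' hq h) (by positivity)
    _ = q ^ j := ENNReal.pow_rpow_inv_natCast hk _

theorem ENNReal.tsum_prod_mul {α β : Type*} (f : α → ℝ≥0∞) (g : β → ℝ≥0∞) :
    ∑' p : α × β, f p.1 * g p.2 = (∑' a, f a) * ∑' b, g b := by
  rw [ENNReal.tsum_prod (f := fun a b => f a * g b), ← ENNReal.tsum_mul_right]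
  simp only [ENNReal.tsum_mul_left]

theorem tsum_inv_add_one_sq_ne_top : ∑' j : ℕ, (((j : ℝ≥0∞) + 1) ^ 2)⁻¹ ≠ ⊤ := by
  have hs : Summable fun j : ℕ => 1 / ((j : ℝ) + 1) ^ 2 := by
    exact_mod_cast (summable_nat_add_iff 1).2 (Real.summable_one_div_nat_pow.2 one_lt_two)
  convert ENNReal.ofReal_ne_top (r := ∑' j : ℕ, 1 / ((j : ℝ) + 1) ^ 2)
  rw [ENNReal.ofReal_tsum_of_nonneg (fun _ => by positivity) hs]
  congr 1 with j
  rw [one_div, ENNReal.ofReal_inv_of_pos (by positivity), ENNReal.ofReal_pow (by positivity)]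
  norm_cast

/-- The prefix `w` takes values in `Fin a` so that there are only `a ^ (n - 1)` of them. -/
def apCylinder (n a d L : ℕ) (w : Fin (n - 1) → Fin a) : Set ℝ :=
  {x | x ∈ Ioo 0 1 ∧ Irrational x ∧ (∀ i : Fin (n - 1), pq x (i + 1) = w i) ∧
    ∀ j ≤ L, pq x (n + j) = a + j * d}

theorem abs_sub_le_of_mem_apCylinder {n a d L : ℕ} {w : Fin (n - 1) → Fin a}
    (had : 0 < a * d) {x y : ℝ} (hx : x ∈ apCylinder n a d L w) (hy : y ∈ apCylinder n a d L w) :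
    |x - y| ≤ ((a * d : ℕ) : ℝ)⁻¹ ^ L := by
  obtain ⟨hx0, hxi, hxw, hxap⟩ := hx
  obtain ⟨hy0, hyi, hyw, hyap⟩ := hy
  have hagree : ∀ i < n + L, pq x (i + 1) = pq y (i + 1) := by
    intro i hi
    rcases Nat.lt_or_ge i (n - 1) with h | h
    · rw [hxw ⟨i, h⟩, hyw ⟨i, h⟩]
    · obtain ⟨j, hj⟩ : ∃ j, i + 1 = n + j := ⟨i + 1 - n, by omega⟩
      rw [hj, hxap j (by omega), hyap j (by omega)]
  have hfactor : ∀ i, ((pq x (i + 1) : ℝ) ^ 2)⁻¹ ≤ 1 := fun i =>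
    inv_le_one_of_one_le₀ (one_le_pow₀ (by exact_mod_cast one_le_pq hx0 hxi i))
  have hblock : ∀ j < L, a * d ≤ pq x (n + j + 1) ^ 2 := by
    intro j hj
    rw [add_assoc, hxap (j + 1) hj, sq]
    exact Nat.mul_le_mul (Nat.le_add_right a _)
      (Nat.le_add_left_of_le (Nat.le_mul_of_pos_left d j.succ_pos))
  calc |x - y| ≤ ∏ i ∈ Finset.range (n + L), ((pq x (i + 1) : ℝ) ^ 2)⁻¹ :=
        abs_sub_le_prod_of_pq_eq _ hx0 hxi hy0 hyi hagree
    _ = (∏ i ∈ Finset.range n, ((pq x (i + 1) : ℝ) ^ 2)⁻¹) *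
          ∏ j ∈ Finset.range L, ((pq x (n + j + 1) : ℝ) ^ 2)⁻¹ := Finset.prod_range_add _ _ _
    _ ≤ 1 * ∏ _j ∈ Finset.range L, ((a * d : ℕ) : ℝ)⁻¹ := by
        gcongr with j hj
        · exact Finset.prod_le_one (fun _ _ => by positivity) fun i _ => hfactor i
        · exact_mod_cast hblock j (Finset.mem_range.mp hj)
    _ = ((a * d : ℕ) : ℝ)⁻¹ ^ L := by rw [one_mul, Finset.prod_const, Finset.card_range]

theorem ediam_apCylinder_le {n a d L : ℕ} (w : Fin (n - 1) → Fin a)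
    (had : 0 < a * d) : Metric.ediam (apCylinder n a d L w) ≤ ((a * d : ℕ) : ℝ≥0∞)⁻¹ ^ L := by
  refine Metric.ediam_le fun x hx y hy => ?_
  rw [edist_dist, Real.dist_eq, ← ENNReal.ofReal_natCast,
    ← ENNReal.ofReal_inv_of_pos (by exact_mod_cast had), ← ENNReal.ofReal_pow (by positivity)]
  exact ENNReal.ofReal_le_ofReal (abs_sub_le_of_mem_apCylinder had hx hy)

theorem natCast_pow_mul_inv_pow_le {n a d : ℕ} (hn : 1 ≤ n) (ha : 2 ≤ a) (hd : 1 ≤ d) :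
    (a : ℝ≥0∞) ^ (n - 1) * ((a * d : ℕ) : ℝ≥0∞)⁻¹ ^ (2 * n) ≤
      2⁻¹ ^ (n - 1) * (((a : ℝ≥0∞) ^ 2)⁻¹ * ((d : ℝ≥0∞) ^ 2)⁻¹) := by
  have hnat : a ^ (n - 1) * (2 ^ (n - 1) * (a ^ 2 * d ^ 2)) ≤ (a * d) ^ (2 * n) :=
    calc a ^ (n - 1) * (2 ^ (n - 1) * (a ^ 2 * d ^ 2))
        ≤ a ^ (n - 1) * (a ^ (n - 1) * (a ^ 2 * d ^ (2 * n))) := by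
          gcongr
          omega
      _ = (a * d) ^ (2 * n) := by
          rw [mul_pow, show 2 * n = n - 1 + (n - 1) + 2 by omega]
          ring
  have hrhs : (2⁻¹ : ℝ≥0∞) ^ (n - 1) * (((a : ℝ≥0∞) ^ 2)⁻¹ * ((d : ℝ≥0∞) ^ 2)⁻¹) =
      ((2 ^ (n - 1) * (a ^ 2 * d ^ 2) : ℕ) : ℝ≥0∞)⁻¹ := by
    push_cast
    rw [ENNReal.mul_inv (by simp) (by simp), ENNReal.mul_inv (by simp) (by simp), ← ENNReal.inv_pow]
  rw [hrhs, ← ENNReal.inv_pow, ENNReal.le_inv_iff_mul_le, mul_right_comm, ← div_eq_mul_inv]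
  refine ENNReal.div_le_of_le_mul ?_
  rw [one_mul]
  exact_mod_cast hnat

theorem tsum_ediam_apCylinder_rpow_le {n a d L k : ℕ} (hn : 1 ≤ n) (ha : 2 ≤ a) (hd : 1 ≤ d)
    (hk : k ≠ 0) (hL : 2 * k * n ≤ L) :
    ∑' w : Fin (n - 1) → Fin a, Metric.ediam (apCylinder n a d L w) ^ (k⁻¹ : ℝ) ≤
      2⁻¹ ^ (n - 1) * (((a : ℝ≥0∞) ^ 2)⁻¹ * ((d : ℝ≥0∞) ^ 2)⁻¹) := by
  have had : 0 < a * d := by positivity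
  have hq : ((a * d : ℕ) : ℝ≥0∞)⁻¹ ≤ 1 := ENNReal.inv_le_one.2 (by exact_mod_cast had)
  calc ∑' w : Fin (n - 1) → Fin a, Metric.ediam (apCylinder n a d L w) ^ (k⁻¹ : ℝ)
      ≤ ∑' _w : Fin (n - 1) → Fin a, ((a * d : ℕ) : ℝ≥0∞)⁻¹ ^ (2 * n) :=
        ENNReal.tsum_le_tsum fun w =>
          (ENNReal.rpow_le_rpow (ediam_apCylinder_le w had) (by positivity)).trans
            (ENNReal.pow_rpow_inv_natCast_le hq hk (by linarith))
    _ = (a : ℝ≥0∞) ^ (n - 1) * ((a * d : ℕ) : ℝ≥0∞)⁻¹ ^ (2 * n) := by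
        simp [tsum_fintype, Finset.card_univ]
    _ ≤ _ := natCast_pow_mul_inv_pow_le hn ha hd

/-- The index `⟨(m, a', d'), w⟩` stands for `n = N + m`, `a = a' + 2`, `d = d' + 1`. -/
abbrev coverIndex (N : ℕ) : Type := Σ p : ℕ × ℕ × ℕ, Fin (N + p.1 - 1) → Fin (p.2.1 + 2)

def apCover (ν : ℕ → ℕ) (N : ℕ) (i : coverIndex N) : Set ℝ :=
  apCylinder (N + i.1.1) (i.1.2.1 + 2) (i.1.2.2 + 1) (ν (N + i.1.1) - 1) i.2

theorem Fset_subset_iUnion_apCover {ν : ℕ → ℕ} {N : ℕ} (hN : 2 ≤ N) (hν : ∀ n ≥ N, ν n ≠ 0) :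
    Fset ν ⊆ ⋃ i, apCover ν N i := by
  rintro x ⟨hJ, hAP⟩
  obtain ⟨n, hNn, hn, hap⟩ := hAP N
  obtain ⟨m, rfl⟩ : ∃ m, n = N + m := ⟨n - N, by omega⟩
  have hlt : pq x (N + m) < pq x (N + m + 1) := hJ.2.2 _ hn
  have ha : 2 ≤ pq x (N + m) :=
    (one_le_pq_one hJ.1).trans_lt (pq_lt_pq_of_mem_Jset hJ (i := 0) (by omega))
  obtain ⟨a', ha'⟩ : ∃ a', pq x (N + m) = a' + 2 := ⟨_, (Nat.sub_add_cancel ha).symm⟩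
  obtain ⟨d', hd'⟩ : ∃ d', pq x (N + m + 1) - pq x (N + m) = d' + 1 :=
    ⟨_, (Nat.sub_add_cancel (Nat.sub_pos_of_lt hlt)).symm⟩
  refine mem_iUnion.2 ⟨⟨(m, a', d'), fun i => ⟨pq x (i + 1), ?_⟩⟩, hJ.1, hJ.2.1, fun i => rfl,
    fun j hj => ?_⟩
  · exact ha' ▸ pq_lt_pq_of_mem_Jset hJ i.2
  · dsimp only at hj ⊢
    rw [hap.eq_add_mul hlt.le (by have := hν _ hNn; omega), hd', ha']

section Cover

variable {ν : ℕ → ℕ} {k N : ℕ}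

theorem ediam_apCover_le (hk : k ≠ 0) (hν : ∀ n ≥ N, 2 * k * n < ν n) (i : coverIndex N) :
    Metric.ediam (apCover ν N i) ≤ 2⁻¹ ^ N := by
  obtain ⟨⟨m, a', d'⟩, w⟩ := i
  have hL : N ≤ ν (N + m) - 1 := by
    have h := hν (N + m) (by omega)
    have : N + m ≤ k * (N + m) := Nat.le_mul_of_pos_left _ (by omega)
    rw [mul_assoc] at h
    omega
  calc Metric.ediam (apCover ν N ⟨(m, a', d'), w⟩)
      ≤ (((a' + 2) * (d' + 1) : ℕ) : ℝ≥0∞)⁻¹ ^ (ν (N + m) - 1) :=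
        ediam_apCylinder_le w (by positivity)
    _ ≤ 2⁻¹ ^ (ν (N + m) - 1) := by
        gcongr
        exact_mod_cast (by nlinarith : 2 ≤ (a' + 2) * (d' + 1))
    _ ≤ 2⁻¹ ^ N := pow_le_pow_right_of_le_one' (by norm_num) hL

theorem tsum_ediam_apCover_rpow_le (hN : 1 ≤ N) (hk : k ≠ 0) (hν : ∀ n ≥ N, 2 * k * n < ν n) :
    ∑' i, Metric.ediam (apCover ν N i) ^ (k⁻¹ : ℝ) ≤
      (∑' m : ℕ, (2⁻¹ : ℝ≥0∞) ^ m) * ((∑' j : ℕ, (((j : ℝ≥0∞) + 1) ^ 2)⁻¹) *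
        ∑' j : ℕ, (((j : ℝ≥0∞) + 1) ^ 2)⁻¹) := by
  set g : ℕ → ℝ≥0∞ := fun j => (((j : ℝ≥0∞) + 1) ^ 2)⁻¹
  have key (m a' d' : ℕ) : ∑' w : Fin (N + m - 1) → Fin (a' + 2),
      Metric.ediam (apCylinder (N + m) (a' + 2) (d' + 1) (ν (N + m) - 1) w) ^ (k⁻¹ : ℝ) ≤
        2⁻¹ ^ m * (g a' * g d') :=
    calc _ ≤ 2⁻¹ ^ (N + m - 1) *
            ((((a' + 2 : ℕ) : ℝ≥0∞) ^ 2)⁻¹ * (((d' + 1 : ℕ) : ℝ≥0∞) ^ 2)⁻¹) :=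
          tsum_ediam_apCylinder_rpow_le (by omega) (by omega) (by omega) hk
            (by have := hν (N + m) (by omega); omega)
      _ ≤ 2⁻¹ ^ m * (g a' * g d') := by
          refine mul_le_mul' (pow_le_pow_right_of_le_one' (by norm_num) (by omega))
            (mul_le_mul' ?_ (by simp [g]))
          simp only [g]
          gcongr
          push_cast
          gcongr
          norm_num
  calc ∑' i, Metric.ediam (apCover ν N i) ^ (k⁻¹ : ℝ)
      = ∑' p : ℕ × ℕ × ℕ, ∑' w, Metric.ediam (apCover ν N ⟨p, w⟩) ^ (k⁻¹ : ℝ) :=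
        ENNReal.tsum_sigma' _
    _ ≤ ∑' p : ℕ × ℕ × ℕ, 2⁻¹ ^ p.1 * (g p.2.1 * g p.2.2) :=
        ENNReal.tsum_le_tsum fun p => key p.1 p.2.1 p.2.2
    _ = _ := by
        rw [ENNReal.tsum_prod_mul (fun m => (2⁻¹ : ℝ≥0∞) ^ m) fun q : ℕ × ℕ => g q.1 * g q.2,
          ENNReal.tsum_prod_mul g g]

end Cover

section Dimension

variable {ν : ℕ → ℕ} {k : ℕ}

theorem hausdorffMeasure_Fset_ne_top (hk : k ≠ 0) (hν : ∀ᶠ n in atTop, 2 * k * n < ν n) :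
    μH[(k⁻¹ : ℝ)] (Fset ν) ≠ ⊤ := by
  obtain ⟨N₀, hN₀⟩ := eventually_atTop.1 hν
  have hstage : ∀ᶠ N in atTop, 2 ≤ N ∧ ∀ n ≥ N, 2 * k * n < ν n :=
    eventually_atTop.2 ⟨max N₀ 2, fun N hN => ⟨by omega, fun n hn => hN₀ n (by omega)⟩⟩
  refine ne_top_of_le_ne_top ?_ ((Measure.hausdorffMeasure_le_liminf_tsum _ _
    (fun N => 2⁻¹ ^ N) (ENNReal.tendsto_pow_atTop_nhds_zero_iff.2 (by norm_num)) (apCover ν)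
    (hstage.mono fun N hN => ediam_apCover_le hk hN.2)
    (hstage.mono fun N hN => Fset_subset_iUnion_apCover hN.1 fun n hn => by
      have := hN.2 n hn; omega)).trans
    (liminf_le_of_frequently_le' (hstage.mono fun N hN =>
      tsum_ediam_apCover_rpow_le (by omega) hk hN.2).frequently))
  rw [ENNReal.tsum_geometric, ENNReal.one_sub_inv_two, inv_inv]
  exact ENNReal.mul_ne_top ENNReal.ofNat_ne_top
    (ENNReal.mul_ne_top tsum_inv_add_one_sq_ne_top tsum_inv_add_one_sq_ne_top)

theorem dimH_Fset_le_inv (hk : k ≠ 0) (hν : ∀ᶠ n in atTop, 2 * k * n < ν n) :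
    dimH (Fset ν) ≤ (k : ℝ≥0∞)⁻¹ := by
  have h := dimH_le_of_hausdorffMeasure_ne_top (d := (k : ℝ≥0)⁻¹) (by
    simpa using hausdorffMeasure_Fset_ne_top hk hν)
  simpa [ENNReal.coe_inv, hk] using h

end Dimension

theorem eventually_mul_lt_of_liminf_div_eq_top {u : ℕ → ℕ}
    (h : liminf (fun n => (u n : ℝ≥0∞) / n) atTop = ⊤) (K : ℕ) :
    ∀ᶠ n in atTop, K * n < u n := by
  filter_upwards [eventually_lt_of_lt_liminf (h ▸ ENNReal.natCast_lt_top K),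
    eventually_ge_atTop 1] with n hn hn1
  have := (ENNReal.lt_div_iff_mul_lt (Or.inl (by exact_mod_cast (by omega : n ≠ 0)))
    (Or.inl (ENNReal.natCast_ne_top n))).1 hn
  exact_mod_cast this

theorem stmt1_general (ν : ℕ → ℕ)
    (hα : Filter.liminf (fun n : ℕ => (ν n : ℝ≥0∞) / (n : ℝ≥0∞)) Filter.atTop = ⊤) :
    dimH (Fset ν) = 0 :=
  le_antisymm (ge_of_tendsto ENNReal.tendsto_inv_nat_nhds_zero (eventually_atTop.2
    ⟨1, fun k hk => dimH_Fset_le_inv (by omega) (eventually_mul_lt_of_liminf_div_eq_top hα _)⟩))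
    zero_le

/-- Theorem 1.1 (case `α = ∞`): if `liminf ν_n / n = ∞` then the `F`-set has
Hausdorff dimension `0`. -/
theorem stmt1 (ν : ℕ → ℕ) (hν1 : ∀ n, 1 ≤ ν n) (hmono : Monotone ν)
    (hα : Filter.liminf (fun n : ℕ => (ν n : ℝ≥0∞) / (n : ℝ≥0∞)) Filter.atTop = ⊤) :
    dimH (Fset ν) = 0 :=
  stmt1_general ν hα
end

section
/- Let s ∈ (0, 1/2] be a real number and let a, ℓ be positive integers with 2sℓ > 1. Then ∑_{M=1}^{∞} ∏_{i=0}^{ℓ} (a + iM)^{−2s} ≤ a^{−(2sℓ−1)} · (2sℓ)/(2sℓ − 1). -/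
open scoped ENNReal

/-!
For `i ≥ 1` the factor `(a + iM)^{-2s}` is at most `(a + M)^{-2s}`, and the factor `i = 0` is at
most `1`, so the `M`-th term is at most `(a + M)^{-2sℓ}`. The integral test bounds the sum of these
by `∫_a^∞ x^{-2sℓ} dx = a^{1-2sℓ} / (2sℓ - 1)`, which is below the claimed bound.
-/

open Set MeasureTheory

lemma ENNReal.rpow_neg_le_rpow_neg {x y : ℝ≥0∞} {t : ℝ} (hxy : x ≤ y) (ht : 0 ≤ t) :
    y ^ (-t) ≤ x ^ (-t) := by
  rw [ENNReal.rpow_neg, ENNReal.rpow_neg]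
  gcongr

lemma prod_range_succ_rpow_neg_le {x : ℕ → ℝ≥0∞} {y : ℝ≥0∞} {t : ℝ} (ht : 0 ≤ t) (ℓ : ℕ)
    (hx₀ : 1 ≤ x 0) (hx : ∀ i < ℓ, y ≤ x (i + 1)) :
    ∏ i ∈ Finset.range (ℓ + 1), x i ^ (-t) ≤ y ^ (-(t * ℓ)) := by
  calc ∏ i ∈ Finset.range (ℓ + 1), x i ^ (-t)
      = (∏ i ∈ Finset.range ℓ, x (i + 1) ^ (-t)) * x 0 ^ (-t) := Finset.prod_range_succ' _ _
    _ ≤ (∏ _i ∈ Finset.range ℓ, y ^ (-t)) * 1 := by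
        refine mul_le_mul' (Finset.prod_le_prod' fun i hi => ?_) ?_
        · exact ENNReal.rpow_neg_le_rpow_neg (hx i (Finset.mem_range.mp hi)) ht
        · simpa using ENNReal.rpow_neg_le_rpow_neg hx₀ ht
    _ = y ^ (-(t * ℓ)) := by
        rw [Finset.prod_const, Finset.card_range, mul_one, ← ENNReal.rpow_natCast,
          ← ENNReal.rpow_mul, neg_mul]

lemma Real.tsum_natCast_rpow_neg_le {p : ℝ} (hp : 1 < p) {N : ℕ} (hN : 0 < N) :
    ∑' n : ℕ, ((n + N + 1 : ℕ) : ℝ) ^ (-p) ≤ (N : ℝ) ^ (1 - p) / (p - 1) := by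
  have hN' : (0 : ℝ) < N := by exact_mod_cast hN
  have anti : AntitoneOn (fun x : ℝ => x ^ (-p)) (Ici (N : ℝ)) := fun x hx y _ hxy =>
    Real.rpow_le_rpow_of_nonpos (hN'.trans_le hx) hxy (by linarith)
  calc ∑' n : ℕ, ((n + N + 1 : ℕ) : ℝ) ^ (-p)
      ≤ ∫ x in Ioi (N : ℝ), x ^ (-p) :=
        anti.tsum_comp_add_le_integral N (integrableOn_Ioi_rpow_of_lt (by linarith) hN')
          fun x hx => Real.rpow_nonneg (hN'.le.trans hx.le) _
    _ = (N : ℝ) ^ (1 - p) / (p - 1) := by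
        rw [integral_Ioi_rpow_of_lt (by linarith) hN', ← neg_div_neg_eq, neg_neg]
        ring_nf

lemma ENNReal.tsum_natCast_rpow_neg_le {p : ℝ} (hp : 1 < p) {N : ℕ} (hN : 0 < N) :
    ∑' n : ℕ, ((n + N + 1 : ℕ) : ℝ≥0∞) ^ (-p) ≤
      (N : ℝ≥0∞) ^ (1 - p) * ENNReal.ofReal (1 / (p - 1)) := by
  have hsum : Summable fun n : ℕ => ((n + N + 1 : ℕ) : ℝ) ^ (-p) := by
    have := (Real.summable_nat_rpow.mpr (neg_lt_neg hp)).comp_injective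
      (add_left_injective (N + 1))
    simpa [Function.comp_def, add_assoc] using this
  have hN' : (0 : ℝ) < N := by exact_mod_cast hN
  calc ∑' n : ℕ, ((n + N + 1 : ℕ) : ℝ≥0∞) ^ (-p)
      = ENNReal.ofReal (∑' n : ℕ, ((n + N + 1 : ℕ) : ℝ) ^ (-p)) := by
        rw [ENNReal.ofReal_tsum_of_nonneg (fun n => by positivity) hsum]
        congr 1 with n
        rw [← ENNReal.ofReal_rpow_of_pos (by positivity), ENNReal.ofReal_natCast]
    _ ≤ ENNReal.ofReal ((N : ℝ) ^ (1 - p) / (p - 1)) :=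
        ENNReal.ofReal_le_ofReal (Real.tsum_natCast_rpow_neg_le hp hN)
    _ = (N : ℝ≥0∞) ^ (1 - p) * ENNReal.ofReal (1 / (p - 1)) := by
        rw [div_eq_mul_one_div, ENNReal.ofReal_mul (by positivity),
          ← ENNReal.ofReal_rpow_of_pos hN', ENNReal.ofReal_natCast]

theorem stmt9_general (s : ℝ) (hs0 : 0 < s) (a ℓ : ℕ) (ha : 1 ≤ a)
    (h : 1 < 2 * s * (ℓ : ℝ)) :
    (∑' M : ℕ, ∏ i ∈ Finset.range (ℓ + 1),
        ((a + i * (M + 1) : ℕ) : ℝ≥0∞) ^ (-(2 * s))) ≤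
      (a : ℝ≥0∞) ^ (-(2 * s * (ℓ : ℝ) - 1)) *
        ENNReal.ofReal ((2 * s * (ℓ : ℝ)) / (2 * s * (ℓ : ℝ) - 1)) := by
  have hterm (M : ℕ) : ∏ i ∈ Finset.range (ℓ + 1), ((a + i * (M + 1) : ℕ) : ℝ≥0∞) ^ (-(2 * s)) ≤
      ((M + a + 1 : ℕ) : ℝ≥0∞) ^ (-(2 * s * ℓ)) :=
    prod_range_succ_rpow_neg_le (by positivity) ℓ (by simpa using ha) fun i _ => by
      exact_mod_cast (by nlinarith : M + a + 1 ≤ a + (i + 1) * (M + 1))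
  calc _ ≤ ∑' M : ℕ, ((M + a + 1 : ℕ) : ℝ≥0∞) ^ (-(2 * s * ℓ)) := ENNReal.tsum_le_tsum hterm
    _ ≤ (a : ℝ≥0∞) ^ (1 - 2 * s * ℓ) * ENNReal.ofReal (1 / (2 * s * ℓ - 1)) :=
        ENNReal.tsum_natCast_rpow_neg_le h ha
    _ ≤ _ := by
        rw [neg_sub]
        gcongr

/-- Lemma 2.2: for `s ∈ (0,1/2]` and positive integers `a, ℓ` with `2sℓ > 1`,
`∑_{M=1}^∞ ∏_{i=0}^{ℓ} (a+iM)^{-2s} ≤ a^{-(2sℓ-1)} · (2sℓ)/(2sℓ-1)`. -/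
theorem stmt9 (s : ℝ) (hs0 : 0 < s) (hs : s ≤ 1 / 2) (a ℓ : ℕ) (ha : 1 ≤ a) (hℓ : 1 ≤ ℓ)
    (h : 1 < 2 * s * (ℓ : ℝ)) :
    (∑' M : ℕ, ∏ i ∈ Finset.range (ℓ + 1),
        ((a + i * (M + 1) : ℕ) : ℝ≥0∞) ^ (-(2 * s))) ≤
      (a : ℝ≥0∞) ^ (-(2 * s * (ℓ : ℝ) - 1)) *
        ENNReal.ofReal ((2 * s * (ℓ : ℝ)) / (2 * s * (ℓ : ℝ) - 1)) :=
  stmt9_general s hs0 a ℓ ha h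
end

section
/- Let c, n be integers with c ≥ 2 and n ≥ 2, let s ∈ (0, 1/2] be a real number, and let γ be a real number with γ ≥ 2 − (n−1)(2s−1). Then the sum of 1/((a_1 a_2 ⋯ a_{n−1})^{2s} · a_n^{γ}) over all n-tuples (a_1, …, a_n) of positive integers satisfying c ≤ a_1 < a_2 < ⋯ < a_n is at most (c−1)^{−(γ + n(2s−1) − 2s)}. -/
open scoped ENNReal

/-!
Write `T_n(m)` for the sum over strictly increasing `n`-tuples with `m < a_1`. Conditioning on
`a_1 = x`, the remaining `(n-1)`-tuple contributes `x^{-2s} T_{n-1}(x)`, and by induction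
`T_{n-1}(x) ≤ x^{1 - γ - (n-2)(2s-1)}`; hence `T_n(m) ≤ ∑_{x > m} x^{-t}` with
`t = γ + (n-1)(2s-1) ≥ 2`. Because `s ≤ 1/2`, the hypothesis on `γ` only weakens as `n` drops, so
the induction goes through. The tail estimate `∑_{x > m} x^{-t} ≤ m^{1-t}` for `t ≥ 2` comes from
`x^{-t} ≤ m^{2-t} (1/(x-1) - 1/x)` and telescoping.
-/

lemma rpow_neg_add_one_le_mul_inv_sub_inv {t m x : ℝ} (ht : 2 ≤ t) (hm : 0 < m) (hmx : m ≤ x) :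
    (x + 1) ^ (-t) ≤ m ^ (2 - t) * (x⁻¹ - (x + 1)⁻¹) := by
  have hx : 0 < x := hm.trans_le hmx
  calc (x + 1) ^ (-t) = (x + 1) ^ (2 - t) * ((x + 1) ^ 2)⁻¹ := by
        rw [← Real.rpow_two, ← Real.rpow_neg (by positivity), ← Real.rpow_add (by positivity)]
        ring_nf
    _ ≤ m ^ (2 - t) * (x * (x + 1))⁻¹ := by
        gcongr ?_ * ?_
        · exact Real.rpow_le_rpow_of_nonpos hm (by linarith) (by linarith)
        · exact inv_anti₀ (by positivity) (by nlinarith)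
    _ = m ^ (2 - t) * (x⁻¹ - (x + 1)⁻¹) := by
        field_simp
        ring

open Finset in
lemma sum_range_rpow_neg_le {t m : ℝ} (ht : 2 ≤ t) (hm : 0 < m) (N : ℕ) :
    ∑ k ∈ range N, (m + k + 1) ^ (-t) ≤ m ^ (1 - t) := by
  calc ∑ k ∈ range N, (m + k + 1) ^ (-t)
      ≤ ∑ k ∈ range N, m ^ (2 - t) * ((m + k)⁻¹ - (m + (k + 1 : ℕ))⁻¹) := by
        gcongr with k
        push_cast
        rw [← add_assoc]
        exact rpow_neg_add_one_le_mul_inv_sub_inv ht hm (by simp)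
    _ = m ^ (2 - t) * (m⁻¹ - (m + N)⁻¹) := by
        rw [← mul_sum, sum_range_sub' (fun k : ℕ ↦ (m + k)⁻¹)]
        simp
    _ ≤ m ^ (2 - t) * m⁻¹ := by
        gcongr
        exact sub_le_self _ (by positivity)
    _ = m ^ (1 - t) := by
        rw [← Real.rpow_neg_one, ← Real.rpow_add hm]
        ring_nf

lemma tsum_indicator_Ioi_rpow_neg_le {t : ℝ} (ht : 2 ≤ t) {m : ℕ} (hm : 0 < m) :
    ∑' a : ℕ, (Set.Ioi m).indicator (fun a : ℕ ↦ (a : ℝ≥0∞) ^ (-t)) a ≤ (m : ℝ≥0∞) ^ (1 - t) := by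
  rw [← ENNReal.summable.sum_add_tsum_nat_add' (k := m + 1),
    Finset.sum_eq_zero fun a ha ↦ Set.indicator_of_notMem (by simp at ha ⊢; omega) _, zero_add]
  refine ENNReal.tsum_le_of_sum_range_le fun N ↦ ?_
  have hm' : (0 : ℝ) < m := by exact_mod_cast hm
  have hterm : ∀ k : ℕ, (Set.Ioi m).indicator (fun a : ℕ ↦ (a : ℝ≥0∞) ^ (-t)) (k + (m + 1)) =
      ENNReal.ofReal (((m : ℝ) + k + 1) ^ (-t)) := fun k ↦ by
    rw [Set.indicator_of_mem (by simp; omega), ← ENNReal.ofReal_rpow_of_pos (by positivity)]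
    norm_cast
    rw [show k + (m + 1) = m + k + 1 by omega]
  simp_rw [hterm]
  rw [← ENNReal.ofReal_sum_of_nonneg fun _ _ ↦ by positivity, ← ENNReal.ofReal_natCast,
    ENNReal.ofReal_rpow_of_pos hm']
  exact ENNReal.ofReal_le_ofReal (sum_range_rpow_neg_le ht hm' N)

lemma ENNReal.tsum_fin_cons {α : Type*} {n : ℕ} (f : (Fin (n + 1) → α) → ℝ≥0∞) :
    ∑' a, f a = ∑' (x : α) (b : Fin n → α), f (Fin.cons x b) := by
  rw [← (Fin.consEquiv fun _ ↦ α).tsum_eq, ENNReal.tsum_prod']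
  rfl

noncomputable def tupleWeight (s γ : ℝ) {n : ℕ} (a : Fin (n + 1) → ℕ) : ℝ≥0∞ :=
  ∏ i : Fin (n + 1), if (i : ℕ) = n then (a i : ℝ≥0∞) ^ (-γ) else (a i : ℝ≥0∞) ^ (-(2 * s))

def increasingAbove (m n : ℕ) : Set (Fin (n + 1) → ℕ) := {a | StrictMono a ∧ m < a 0}

section IncreasingTuples

variable {s γ : ℝ} {m n : ℕ}

lemma tupleWeight_cons (x : ℕ) (b : Fin (n + 1) → ℕ) :
    tupleWeight s γ (Fin.cons x b : Fin (n + 2) → ℕ) =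
      (x : ℝ≥0∞) ^ (-(2 * s)) * tupleWeight s γ b := by
  simp [tupleWeight, Fin.prod_univ_succ]

lemma cons_mem_increasingAbove_iff (x : ℕ) (b : Fin (n + 1) → ℕ) :
    (Fin.cons x b : Fin (n + 2) → ℕ) ∈ increasingAbove m (n + 1) ↔
      m < x ∧ b ∈ increasingAbove x n := by
  have : StrictMono (Fin.cons x b : Fin (n + 2) → ℕ) ↔ x < b 0 ∧ StrictMono b :=
    strictMono_vecCons
  simp only [increasingAbove, Set.mem_ofPred_eq, this, Fin.cons_zero]
  tauto

lemma indicator_increasingAbove_cons (x : ℕ) (b : Fin (n + 1) → ℕ) :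
    (increasingAbove m (n + 1)).indicator (tupleWeight s γ) (Fin.cons x b) =
      (Set.Ioi m).indicator (fun x : ℕ ↦ (x : ℝ≥0∞) ^ (-(2 * s))) x *
        (increasingAbove x n).indicator (tupleWeight s γ) b := by
  by_cases hx : m < x
  · by_cases hb : b ∈ increasingAbove x n
    · simp [Set.indicator_of_mem, (cons_mem_increasingAbove_iff x b).2 ⟨hx, hb⟩, hb, hx,
        tupleWeight_cons]
    · simp [Set.indicator_of_notMem, cons_mem_increasingAbove_iff, hb]
  · simp [Set.indicator_of_notMem, cons_mem_increasingAbove_iff, hx]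

theorem tsum_indicator_increasingAbove_le (hs : s ≤ 1 / 2) (n : ℕ) (hm : 0 < m)
    (hγ : 2 ≤ γ + n * (2 * s - 1)) :
    ∑' a, (increasingAbove m n).indicator (tupleWeight s γ) a ≤
      (m : ℝ≥0∞) ^ (1 - (γ + n * (2 * s - 1))) := by
  induction n generalizing m with
  | zero =>
    rw [← (Equiv.funUnique (Fin 1) ℕ).symm.tsum_eq]
    convert tsum_indicator_Ioi_rpow_neg_le (t := γ) (by simpa using hγ) hm using 3 with x
    · simp [Set.indicator, increasingAbove, tupleWeight, Subsingleton.strictMono]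
    · simp
  | succ n ih =>
    have hγ' : 2 ≤ γ + n * (2 * s - 1) := by push_cast at hγ; nlinarith
    calc ∑' a, (increasingAbove m (n + 1)).indicator (tupleWeight s γ) a
        = ∑' x, (Set.Ioi m).indicator (fun x : ℕ ↦ (x : ℝ≥0∞) ^ (-(2 * s))) x *
            ∑' b, (increasingAbove x n).indicator (tupleWeight s γ) b := by
          simp_rw [ENNReal.tsum_fin_cons, indicator_increasingAbove_cons, ENNReal.tsum_mul_left]
      _ ≤ ∑' x, (Set.Ioi m).indicator
            (fun x : ℕ ↦ (x : ℝ≥0∞) ^ (-(γ + (n + 1 : ℕ) * (2 * s - 1)))) x := by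
          refine ENNReal.tsum_le_tsum fun x ↦ ?_
          by_cases hx : x ∈ Set.Ioi m
          · have hx0 : 0 < x := hm.trans hx
            simp only [Set.indicator_of_mem hx]
            calc _ ≤ (x : ℝ≥0∞) ^ (-(2 * s)) * (x : ℝ≥0∞) ^ (1 - (γ + n * (2 * s - 1))) := by
                  gcongr
                  exact ih hx0 hγ'
              _ = _ := by
                  rw [← ENNReal.rpow_add _ _ (by simp; omega) (ENNReal.natCast_ne_top x)]
                  push_cast
                  ring_nf
          · simp [Set.indicator_of_notMem hx]
      _ ≤ _ := tsum_indicator_Ioi_rpow_neg_le hγ hm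

end IncreasingTuples

/-- Lemma 2.3: for integers `c, n ≥ 2`, `s ∈ (0,1/2]` and `γ ≥ 2 - (n-1)(2s-1)`,
the sum of `(a_1 ⋯ a_{n-1})^{-2s} a_n^{-γ}` over all strictly increasing `n`-tuples
of positive integers with `a_1 ≥ c` is at most `(c-1)^{-(γ + n(2s-1) - 2s)}`. -/
theorem stmt10 (c n : ℕ) (hc : 2 ≤ c) (hn : 2 ≤ n) (s γ : ℝ)
    (hs : s ≤ 1 / 2)
    (hγ : 2 - ((n : ℝ) - 1) * (2 * s - 1) ≤ γ) :
    (∑' a : {a : Fin n → ℕ // StrictMono a ∧ c ≤ a ⟨0, by omega⟩},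
        ∏ i : Fin n,
          if (i : ℕ) = n - 1 then ((a.1 i : ℝ≥0∞)) ^ (-γ)
          else ((a.1 i : ℝ≥0∞)) ^ (-(2 * s))) ≤
      ((c - 1 : ℕ) : ℝ≥0∞) ^ (-(γ + (n : ℝ) * (2 * s - 1) - 2 * s)) := by
  obtain ⟨k, rfl⟩ : ∃ k, n = k + 1 := ⟨n - 1, by omega⟩
  have hset : {a : Fin (k + 1) → ℕ | StrictMono a ∧ c ≤ a 0} = increasingAbove (c - 1) k := by
    ext a
    exact and_congr_right fun _ ↦ by omega
  calc _ = ∑' a, (increasingAbove (c - 1) k).indicator (tupleWeight s γ) a := by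
        rw [← hset, ← tsum_subtype]
        rfl
    _ ≤ _ := tsum_indicator_increasingAbove_le hs k (by omega) (by push_cast at hγ; linarith)
    _ = _ := by
        push_cast
        ring_nf
end

section
/- Let {V_1, W_1, V_2, W_2, …} be a partition of the positive integers into nonempty bounded intervals such that max V_k + 1 = min W_k and max W_k + 1 = min V_{k+1} for all k ≥ 1, and let (L_n)_{n≥1} be a sequence of nonempty bounded intervals in the positive integers. Define Λ = {x ∈ (0,1) irrational : a_n(x) ∈ L_n for every n ∈ V_k and every k ≥ 1, and a_n(x) = a_{max V_k}(x) + n − max V_k for every n ∈ W_k and every k ≥ 1}. Then there exists a Borel probability measure μ on [0,1] such that μ(Λ) = 1 and, for every n ≥ 1 and every (a_1,…,a_n) ∈ ℕ^n with I_n(a_1,…,a_n) ∩ Λ ≠ ∅: μ(I_n(a_1,…,a_n)) = ∏_{i=1}^{n} 1/#L_i if n ∈ V_1; μ(I_n(a_1,…,a_n)) = ∏_{m=1}^{k} ∏_{i∈V_m} 1/#L_i if n ∈ W_k for some k ≥ 1; and μ(I_n(a_1,…,a_n)) = (∏_{m=1}^{k} ∏_{i∈V_m} 1/#L_i) · ∏_{i=min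 V_{k+1}}^{n} 1/#L_i if n ∈ V_{k+1} for some k ≥ 1. -/
/-!
Draw the partial quotients at the positions of the blocks `V k` independently and uniformly from
the sets `L n`, and let the partial quotients at the positions of `W k` continue the progression
of difference `1` started at `max V k`; `μ` is the law of the resulting continued fraction, i.e.
the image of the product measure under the map from digit sequences to continued fractions.
Such a number lies in `Λ` by construction. It lies in a cylinder `I_n(a)` meeting `Λ` exactly
when its free digits up to `n` agree with `a`, an event of probability `∏ 1 / #L i` over the
free positions `i ≤ n`; grouping these positions block by block gives the three formulas.
-/

open Filter MeasureTheory Set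
open scoped ENNReal NNReal Topology

/-- The fundamental interval (cylinder) `I_n(a_1, …, a_n)`: points of `(0,1]` whose
first `n` partial quotients are `a 1, …, a n`. -/
def cyl (n : ℕ) (a : ℕ → ℕ) : Set ℝ :=
  {x | x ∈ Set.Ioc (0 : ℝ) 1 ∧ ∀ i : ℕ, 1 ≤ i → i ≤ n → pq x i = a i}

/-- The set `Λ` of Lemma 2.6: irrationals in `(0,1)` whose partial quotients lie in
`L n` at positions `n ∈ V k` and continue the arithmetic progression of common
difference `1` started at `max V k` at positions `n ∈ W k`. -/
def Lam (V W : ℕ → Set ℕ) (L : ℕ → Finset ℕ) : Set ℝ :=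
  {x | x ∈ Set.Ioo (0 : ℝ) 1 ∧ Irrational x ∧
    (∀ k : ℕ, 1 ≤ k → ∀ n ∈ V k, pq x n ∈ L n) ∧
    (∀ k : ℕ, 1 ≤ k → ∀ n ∈ W k, pq x n = pq x (sSup (V k)) + (n - sSup (V k)))}

/-! ### Infinite continued fractions -/

/-- `cfConv n d = [0; d 0, …, d (n-1)]`, where digits below `1` are read as `1`, so that every
sequence of naturals is the digit sequence of a continued fraction. -/
noncomputable def cfConv : ℕ → (ℕ → ℕ) → ℝ
  | 0, _ => 0
  | n + 1, d => 1 / ((max 1 (d 0) : ℕ) + cfConv n fun i => d (i + 1))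

lemma one_le_max_one_cast (m : ℕ) : (1 : ℝ) ≤ (max 1 m : ℕ) := by
  exact_mod_cast le_max_left 1 m

lemma cfConv_mem_Icc (n : ℕ) (d : ℕ → ℕ) : cfConv n d ∈ Icc (0 : ℝ) 1 := by
  induction n generalizing d with
  | zero => simp [cfConv]
  | succ n ih =>
    have h1 := one_le_max_one_cast (d 0)
    have h2 := (ih fun i => d (i + 1)).1
    rw [cfConv, mem_Icc, div_le_one (by linarith)]
    exact ⟨by positivity, by linarith⟩

lemma abs_one_div_add_one_div_add_sub_le {a b x y : ℝ} (ha : 1 ≤ a) (hb : 1 ≤ b)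
    (hx : 0 ≤ x) (hy : 0 ≤ y) :
    |1 / (a + 1 / (b + x)) - 1 / (a + 1 / (b + y))| ≤ |x - y| / 4 := by
  have hxy : 1 / (a + 1 / (b + x)) - 1 / (a + 1 / (b + y))
      = (x - y) / ((a * (b + x) + 1) * (a * (b + y) + 1)) := by
    field_simp
    ring
  have hx' : 1 ≤ a * (b + x) := by nlinarith
  have hy' : 1 ≤ a * (b + y) := by nlinarith
  have hD : 0 < (a * (b + x) + 1) * (a * (b + y) + 1) := mul_pos (by linarith) (by linarith)
  rw [hxy, abs_div, abs_of_pos hD]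
  exact div_le_div_of_nonneg_left (abs_nonneg _) (by norm_num) (by nlinarith)

lemma abs_cfConv_sub_le_one (m n : ℕ) (d : ℕ → ℕ) : |cfConv m d - cfConv n d| ≤ 1 := by
  have hm := cfConv_mem_Icc m d
  have hn := cfConv_mem_Icc n d
  rw [abs_sub_le_iff]
  constructor <;> linarith [hm.1, hm.2, hn.1, hn.2]

/-- Two steps of the recursion contract distances by `4`, whence the rate `2⁻¹ ^ n`. -/
lemma abs_cfConv_succ_sub_le (n : ℕ) (d : ℕ → ℕ) :
    |cfConv (n + 1) d - cfConv n d| ≤ 2 * 2⁻¹ ^ n := by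
  induction n using Nat.twoStepInduction generalizing d with
  | zero => linarith [abs_cfConv_sub_le_one 1 0 d]
  | one => linarith [abs_cfConv_sub_le_one 2 1 d]
  | more n ih _ =>
    calc |cfConv (n + 3) d - cfConv (n + 2) d|
        ≤ |cfConv (n + 1) (fun i => d (i + 2)) - cfConv n (fun i => d (i + 2))| / 4 :=
          abs_one_div_add_one_div_add_sub_le (one_le_max_one_cast _) (one_le_max_one_cast _)
            (cfConv_mem_Icc _ _).1 (cfConv_mem_Icc _ _).1
      _ ≤ 2 * 2⁻¹ ^ n / 4 := by gcongr; exact ih _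
      _ = 2 * 2⁻¹ ^ (n + 2) := by ring

lemma cauchySeq_cfConv (d : ℕ → ℕ) : CauchySeq fun n => cfConv n d :=
  cauchySeq_of_le_geometric 2⁻¹ 2 (by norm_num) fun n => by
    rw [dist_comm, Real.dist_eq]
    exact abs_cfConv_succ_sub_le n d

noncomputable def cfLim (d : ℕ → ℕ) : ℝ :=
  limUnder atTop fun n => cfConv n d

lemma tendsto_cfConv (d : ℕ → ℕ) : Tendsto (fun n => cfConv n d) atTop (𝓝 (cfLim d)) :=
  (cauchySeq_cfConv d).tendsto_limUnder

lemma cfLim_mem_Icc (d : ℕ → ℕ) : cfLim d ∈ Icc (0 : ℝ) 1 :=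
  isClosed_Icc.mem_of_tendsto (tendsto_cfConv d) (Eventually.of_forall fun n => cfConv_mem_Icc n d)

lemma cfLim_eq (d : ℕ → ℕ) : cfLim d = 1 / ((max 1 (d 0) : ℕ) + cfLim fun i => d (i + 1)) := by
  have hden : ((max 1 (d 0) : ℕ) : ℝ) + cfLim (fun i => d (i + 1)) ≠ 0 := by
    linarith [one_le_max_one_cast (d 0), (cfLim_mem_Icc fun i => d (i + 1)).1]
  refine tendsto_nhds_unique ((tendsto_add_atTop_iff_nat 1).2 (tendsto_cfConv d)) ?_
  exact tendsto_const_nhds.div (tendsto_const_nhds.add (tendsto_cfConv _)) hden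

lemma cfLim_pos (d : ℕ → ℕ) : 0 < cfLim d := by
  rw [cfLim_eq]
  exact one_div_pos.2 <| by
    linarith [one_le_max_one_cast (d 0), (cfLim_mem_Icc fun i => d (i + 1)).1]

lemma cfLim_mem_Ioo (d : ℕ → ℕ) : cfLim d ∈ Ioo (0 : ℝ) 1 := by
  refine ⟨cfLim_pos d, ?_⟩
  have := one_le_max_one_cast (d 0)
  have := cfLim_pos fun i => d (i + 1)
  rw [cfLim_eq, div_lt_one (by linarith)]
  linarith

lemma floor_one_div_cfLim (d : ℕ → ℕ) : ⌊1 / cfLim d⌋ = (max 1 (d 0) : ℕ) := by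
  rw [cfLim_eq, one_div_one_div, Int.floor_eq_iff]
  have := cfLim_mem_Ioo fun i => d (i + 1)
  push_cast
  constructor <;> linarith [this.1, this.2]

lemma gaussMap_cfLim (d : ℕ → ℕ) : gaussMap (cfLim d) = cfLim fun i => d (i + 1) := by
  rw [gaussMap, floor_one_div_cfLim]
  nth_rw 1 [cfLim_eq]
  rw [one_div_one_div]
  push_cast
  ring

lemma gaussMap_iterate_cfLim (d : ℕ → ℕ) (k : ℕ) :
    gaussMap^[k] (cfLim d) = cfLim fun i => d (i + k) := by
  induction k generalizing d with
  | zero => rfl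
  | succ k ih =>
    rw [Function.iterate_succ_apply, gaussMap_cfLim, ih]
    simp only [add_assoc]

lemma pq_cfLim (d : ℕ → ℕ) (n : ℕ) : pq (cfLim d) (n + 1) = max 1 (d n) := by
  rw [pq, Nat.add_sub_cancel, gaussMap_iterate_cfLim, floor_one_div_cfLim, Int.toNat_natCast,
    zero_add]

lemma gaussMap_ratCast (q : ℚ) : gaussMap q = ((Int.fract q⁻¹ : ℚ) : ℝ) := by
  rw [gaussMap, one_div, ← Rat.cast_inv, Rat.floor_cast, Int.fract]
  push_cast
  ring

/-- The Gauss map strictly decreases the numerator of a rational in `(0, 1)`. -/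
lemma exists_gaussMap_iterate_ratCast_notMem_Ioo (q : ℚ) :
    ∃ n, gaussMap^[n] q ∉ Ioo (0 : ℝ) 1 := by
  induction h : q.num.toNat using Nat.strong_induction_on generalizing q with
  | _ N ih =>
    by_cases hq : (q : ℝ) ∈ Ioo 0 1
    · have hq0 : 0 < q := by exact_mod_cast hq.1
      have hr0 : 0 ≤ Int.fract q⁻¹ := Int.fract_nonneg _
      have hlt := Rat.fract_inv_num_lt_num_of_pos hq0
      have := Rat.num_nonneg.2 hr0
      obtain ⟨n, hn⟩ := ih _ (by omega) (Int.fract q⁻¹) rfl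
      exact ⟨n + 1, by rwa [Function.iterate_succ_apply, gaussMap_ratCast]⟩
    · exact ⟨0, hq⟩

lemma irrational_cfLim (d : ℕ → ℕ) : Irrational (cfLim d) := by
  rintro ⟨q, hq⟩
  obtain ⟨n, hn⟩ := exists_gaussMap_iterate_ratCast_notMem_Ioo q
  rw [hq, gaussMap_iterate_cfLim] at hn
  exact hn (cfLim_mem_Ioo _)

lemma measurable_cfConv (n : ℕ) : Measurable (cfConv n) := by
  induction n with
  | zero => exact measurable_const
  | succ n ih =>
    refine measurable_const.div (Measurable.add ?_ (ih.comp ?_))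
    · exact (measurable_from_top (f := fun m : ℕ => ((max 1 m : ℕ) : ℝ))).comp
        (measurable_pi_apply 0)
    · exact measurable_pi_lambda _ fun i => measurable_pi_apply (i + 1)

lemma measurable_cfLim : Measurable cfLim :=
  measurable_of_tendsto_metrizable measurable_cfConv (tendsto_pi_nhds.2 tendsto_cfConv)

lemma measurable_pq (n : ℕ) : Measurable fun x => pq x n := by
  have hinv : Measurable fun x : ℝ => 1 / x := measurable_const.div measurable_id
  have hgauss : Measurable gaussMap :=
    hinv.sub (measurable_from_top.comp (Int.measurable_floor.comp hinv))
  exact measurable_from_top.comp (Int.measurable_floor.comp (hinv.comp (hgauss.iterate _)))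

lemma measurableSet_cyl (n : ℕ) (a : ℕ → ℕ) : MeasurableSet (cyl n a) := by
  have : cyl n a = Ioc 0 1 ∩ ⋂ i ∈ Finset.Icc 1 n, (fun x => pq x i) ⁻¹' {a i} := by
    ext x
    simp [cyl]
  rw [this]
  exact measurableSet_Ioc.inter <| .biInter (Finset.countable_toSet _) fun i _ =>
    measurable_pq i (measurableSet_singleton _)

/-! ### Anchored digit sequences -/

section Anchored

variable {anchor : ℕ → ℕ}

variable (anchor) in
/-- Positions with `anchor n = n` carry free digits; any other position continues the progression
of difference `1` started at the free position `anchor n`. -/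
noncomputable def anchoredCF (ω : ℕ → ℕ) : ℝ :=
  cfLim fun j => ω (anchor (j + 1)) + (j + 1 - anchor (j + 1))

lemma measurable_anchoredCF : Measurable (anchoredCF anchor) :=
  measurable_cfLim.comp <| measurable_pi_lambda _ fun j =>
    (measurable_from_top (f := fun m : ℕ => m + (j + 1 - anchor (j + 1)))).comp
      (measurable_pi_apply _)

lemma pq_anchoredCF {ω : ℕ → ℕ} {n : ℕ} (hn : 1 ≤ n) (hω : 1 ≤ ω (anchor n)) :
    pq (anchoredCF anchor ω) n = ω (anchor n) + (n - anchor n) := by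
  obtain ⟨m, rfl⟩ := Nat.exists_eq_add_of_le' hn
  exact (pq_cfLim _ m).trans (max_eq_right (le_add_right hω))

lemma anchoredCF_mem_cyl_iff (hle : ∀ i, anchor i ≤ i) (hpos : ∀ i, 1 ≤ i → 1 ≤ anchor i)
    (hidem : ∀ i, anchor (anchor i) = anchor i) {ω : ℕ → ℕ} (hω : ∀ i, 1 ≤ i → 1 ≤ ω i)
    {n : ℕ} {a : ℕ → ℕ} (ha : ∀ i ∈ Finset.Icc 1 n, a i = a (anchor i) + (i - anchor i)) :
    anchoredCF anchor ω ∈ cyl n a ↔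
      ∀ i ∈ (Finset.Icc 1 n).filter (fun i => anchor i = i), ω i = a i := by
  have hpq : ∀ i, 1 ≤ i → pq (anchoredCF anchor ω) i = ω (anchor i) + (i - anchor i) :=
    fun i hi => pq_anchoredCF hi (hω _ (hpos i hi))
  simp only [cyl, Finset.mem_filter, Finset.mem_Icc, and_imp]
  refine ⟨fun h i hi hin hfree => ?_, fun h => ⟨Ioo_subset_Ioc_self (cfLim_mem_Ioo _),
    fun i hi hin => ?_⟩⟩
  · have := h.2 i hi hin
    rwa [hpq i hi, hfree, Nat.sub_self, add_zero] at this
  · have hai := hle i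
    rw [hpq i hi, h (anchor i) (hpos i hi) (by omega) (hidem i), ha i (Finset.mem_Icc.2 ⟨hi, hin⟩)]

theorem infinitePi_map_anchoredCF_cyl (hle : ∀ i, anchor i ≤ i)
    (hpos : ∀ i, 1 ≤ i → 1 ≤ anchor i) (hidem : ∀ i, anchor (anchor i) = anchor i)
    {ρ : ℕ → Measure ℕ} [∀ i, IsProbabilityMeasure (ρ i)]
    (hρ : ∀ᵐ ω ∂Measure.infinitePi ρ, ∀ i, 1 ≤ i → 1 ≤ ω i)
    {n : ℕ} {a : ℕ → ℕ} (ha : ∀ i ∈ Finset.Icc 1 n, a i = a (anchor i) + (i - anchor i)) :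
    (Measure.infinitePi ρ).map (anchoredCF anchor) (cyl n a) =
      ∏ i ∈ (Finset.Icc 1 n).filter (fun i => anchor i = i), ρ i {a i} := by
  rw [Measure.map_apply measurable_anchoredCF (measurableSet_cyl n a),
    ← Measure.infinitePi_pi _ fun i _ => measurableSet_singleton (a i)]
  refine measure_congr <| hρ.mono fun ω hω => propext ?_
  change anchoredCF anchor ω ∈ cyl n a ↔ ω ∈ Set.pi _ _
  simpa only [Set.mem_pi, Finset.mem_coe, mem_singleton_iff] using
    anchoredCF_mem_cyl_iff hle hpos hidem hω ha

end Anchored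

lemma ae_infinitePi_forall {ι : Type*} [Countable ι] {X : ι → Type*}
    [∀ i, MeasurableSpace (X i)] {ρ : (i : ι) → Measure (X i)} [∀ i, IsProbabilityMeasure (ρ i)]
    {p : (i : ι) → X i → Prop} (h : ∀ i, ∀ᵐ x ∂ρ i, p i x) :
    ∀ᵐ ω ∂Measure.infinitePi ρ, ∀ i, p i (ω i) :=
  ae_all_iff.2 fun i => (measurePreserving_eval_infinitePi ρ i).quasiMeasurePreserving.ae (h i)

section Uniform

variable {α : Type*} [MeasurableSpace α] [MeasurableSingletonClass α] [Inhabited α]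

/-- For `s = ∅` the Dirac mass at `default` stands in, so that this is always a probability
measure. -/
noncomputable def uniformOrDirac (s : Finset α) : Measure α :=
  if h : s.Nonempty then (PMF.uniformOfFinset s h).toMeasure else Measure.dirac default

instance (s : Finset α) : IsProbabilityMeasure (uniformOrDirac s) := by
  unfold uniformOrDirac
  split <;> infer_instance

lemma uniformOrDirac_singleton {s : Finset α} {a : α} (ha : a ∈ s) :
    uniformOrDirac s {a} = 1 / (s.card : ℝ≥0∞) := by
  have hs : s.Nonempty := ⟨a, ha⟩
  rw [uniformOrDirac, dif_pos hs, PMF.toMeasure_apply_singleton _ _ (measurableSet_singleton a),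
    PMF.uniformOfFinset_apply_of_mem _ ha, one_div]

lemma ae_uniformOrDirac_mem {s : Finset α} (hs : s.Nonempty) : ∀ᵐ x ∂uniformOrDirac s, x ∈ s := by
  rw [uniformOrDirac, dif_pos hs, ae_iff]
  change (PMF.uniformOfFinset s hs).toMeasure (s : Set α)ᶜ = 0
  rw [PMF.toMeasure_apply_eq_zero_iff _ s.measurableSet.compl, PMF.support_uniformOfFinset]
  exact disjoint_compl_right

end Uniform

lemma prod_filter_Icc_one_mul_prod_filter_Ioc {M : Type*} [CommMonoid M] (p : ℕ → Prop)
    [DecidablePred p] (g : ℕ → M) {m n : ℕ} (hmn : m ≤ n) :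
    (∏ i ∈ (Finset.Icc 1 m).filter p, g i) * ∏ i ∈ (Finset.Ioc m n).filter p, g i =
      ∏ i ∈ (Finset.Icc 1 n).filter p, g i := by
  simp only [Finset.prod_filter]
  exact Finset.prod_Ioc_consecutive _ (Nat.zero_le m) hmn

/-! ### Block partitions -/

structure IsBlockPartition (V W : ℕ → Set ℕ) : Prop where
  V_eq_Icc : ∀ k : ℕ, 1 ≤ k → ∃ a b : ℕ, 1 ≤ a ∧ a ≤ b ∧ V k = Set.Icc a b
  W_eq_Icc : ∀ k : ℕ, 1 ≤ k → ∃ a b : ℕ, 1 ≤ a ∧ a ≤ b ∧ W k = Set.Icc a b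
  sSup_V_add_one : ∀ k : ℕ, 1 ≤ k → sSup (V k) + 1 = sInf (W k)
  sSup_W_add_one : ∀ k : ℕ, 1 ≤ k → sSup (W k) + 1 = sInf (V (k + 1))
  iUnion_eq : (⋃ k ∈ Set.Ici 1, (V k ∪ W k)) = {n : ℕ | 1 ≤ n}

open Classical in
noncomputable def blockAnchor (V W : ℕ → Set ℕ) (n : ℕ) : ℕ :=
  if h : ∃ k, 1 ≤ k ∧ n ∈ W k then sSup (V h.choose) else n

namespace IsBlockPartition

variable {V W : ℕ → Set ℕ} {k m n : ℕ}

lemma mem_V_iff (hB : IsBlockPartition V W) (hk : 1 ≤ k) :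
    n ∈ V k ↔ sInf (V k) ≤ n ∧ n ≤ sSup (V k) := by
  obtain ⟨a, b, -, hab, hV⟩ := hB.V_eq_Icc k hk
  rw [hV, csInf_Icc hab, csSup_Icc hab, mem_Icc]

lemma one_le_sInf_V (hB : IsBlockPartition V W) (hk : 1 ≤ k) : 1 ≤ sInf (V k) := by
  obtain ⟨a, b, ha, hab, hV⟩ := hB.V_eq_Icc k hk
  rwa [hV, csInf_Icc hab]

lemma sInf_V_le_sSup_V (hB : IsBlockPartition V W) (hk : 1 ≤ k) : sInf (V k) ≤ sSup (V k) := by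
  obtain ⟨a, b, -, hab, hV⟩ := hB.V_eq_Icc k hk
  rwa [hV, csInf_Icc hab, csSup_Icc hab]

lemma mem_W_iff (hB : IsBlockPartition V W) (hk : 1 ≤ k) :
    n ∈ W k ↔ sSup (V k) < n ∧ n ≤ sSup (W k) := by
  obtain ⟨a, b, -, hab, hW⟩ := hB.W_eq_Icc k hk
  have := hB.sSup_V_add_one k hk
  rw [hW, csInf_Icc hab] at this
  rw [hW, csSup_Icc hab, mem_Icc]
  omega

lemma sSup_V_lt_sSup_W (hB : IsBlockPartition V W) (hk : 1 ≤ k) : sSup (V k) < sSup (W k) := by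
  obtain ⟨a, b, -, hab, hW⟩ := hB.W_eq_Icc k hk
  have := hB.sSup_V_add_one k hk
  rw [hW, csInf_Icc hab] at this
  rw [hW, csSup_Icc hab]
  omega

lemma sSup_W_lt_sInf_V (hB : IsBlockPartition V W) (hk : 1 ≤ k) (hkm : k < m) :
    sSup (W k) < sInf (V m) := by
  induction m with
  | zero => omega
  | succ m ih =>
    have := hB.sSup_W_add_one m
    rcases (Nat.lt_succ_iff.1 hkm).lt_or_eq with h | rfl
    · have := ih h
      have := hB.sInf_V_le_sSup_V (k := m) (by omega)
      have := hB.sSup_V_lt_sSup_W (k := m) (by omega)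
      omega
    · omega

lemma sInf_V_one (hB : IsBlockPartition V W) : sInf (V 1) = 1 := by
  have h1 : (1 : ℕ) ∈ ⋃ k ∈ Set.Ici 1, (V k ∪ W k) := by rw [hB.iUnion_eq]; exact Nat.le_refl 1
  simp only [mem_iUnion, mem_union, mem_Ici] at h1
  obtain ⟨k, hk, h⟩ := h1
  have hVk : sInf (V 1) ≤ sInf (V k) := by
    rcases hk.lt_or_eq with hk1 | rfl
    · have := hB.sSup_W_lt_sInf_V le_rfl hk1
      have := hB.sInf_V_le_sSup_V (k := 1) le_rfl
      have := hB.sSup_V_lt_sSup_W (k := 1) le_rfl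
      omega
    · exact le_rfl
  have := hB.one_le_sInf_V (k := 1) le_rfl
  have := hB.one_le_sInf_V hk
  have := hB.sInf_V_le_sSup_V hk
  rcases h with h | h
  · have := (hB.mem_V_iff hk).1 h
    omega
  · have := (hB.mem_W_iff hk).1 h
    omega

lemma notMem_W_of_mem_V (hB : IsBlockPartition V W) (hk : 1 ≤ k) (hm : 1 ≤ m) (h : n ∈ V k) :
    n ∉ W m := by
  intro h'
  have := (hB.mem_V_iff hk).1 h
  have := (hB.mem_W_iff hm).1 h'
  rcases lt_trichotomy k m with hkm | rfl | hkm
  · have := hB.sSup_W_lt_sInf_V hk hkm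
    have := hB.sInf_V_le_sSup_V hm
    have := hB.sSup_V_lt_sSup_W hk
    omega
  · omega
  · have := hB.sSup_W_lt_sInf_V hm hkm
    omega

lemma eq_of_mem_W (hB : IsBlockPartition V W) (hk : 1 ≤ k) (hm : 1 ≤ m) (h : n ∈ W k)
    (h' : n ∈ W m) : k = m := by
  have := (hB.mem_W_iff hk).1 h
  have := (hB.mem_W_iff hm).1 h'
  by_contra hne
  rcases Nat.lt_or_gt_of_ne hne with hkm | hkm
  · have := hB.sSup_W_lt_sInf_V hk hkm
    have := hB.sInf_V_le_sSup_V hm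
    omega
  · have := hB.sSup_W_lt_sInf_V hm hkm
    have := hB.sInf_V_le_sSup_V hk
    omega

lemma blockAnchor_of_mem_W (hB : IsBlockPartition V W) (hk : 1 ≤ k) (h : n ∈ W k) :
    blockAnchor V W n = sSup (V k) := by
  have hex : ∃ k, 1 ≤ k ∧ n ∈ W k := ⟨k, hk, h⟩
  rw [blockAnchor, dif_pos hex, hB.eq_of_mem_W hex.choose_spec.1 hk hex.choose_spec.2 h]

lemma blockAnchor_of_forall_notMem_W (h : ∀ k, 1 ≤ k → n ∉ W k) : blockAnchor V W n = n := by
  rw [blockAnchor, dif_neg fun ⟨k, hk, hn⟩ => h k hk hn]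

lemma blockAnchor_of_mem_V (hB : IsBlockPartition V W) (hk : 1 ≤ k) (h : n ∈ V k) :
    blockAnchor V W n = n :=
  blockAnchor_of_forall_notMem_W fun _ hm => hB.notMem_W_of_mem_V hk hm h

lemma blockAnchor_eq_self_iff (hB : IsBlockPartition V W) (hn : 1 ≤ n) :
    blockAnchor V W n = n ↔ ∃ k, 1 ≤ k ∧ n ∈ V k := by
  refine ⟨fun h => ?_, fun ⟨k, hk, h⟩ => hB.blockAnchor_of_mem_V hk h⟩
  have hn' : n ∈ ⋃ k ∈ Set.Ici 1, (V k ∪ W k) := by rw [hB.iUnion_eq]; exact hn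
  simp only [mem_iUnion, mem_union, mem_Ici] at hn'
  obtain ⟨k, hk, hV | hW⟩ := hn'
  · exact ⟨k, hk, hV⟩
  · have := (hB.mem_W_iff hk).1 hW
    rw [hB.blockAnchor_of_mem_W hk hW] at h
    omega

lemma blockAnchor_le (hB : IsBlockPartition V W) (n : ℕ) : blockAnchor V W n ≤ n := by
  by_cases h : ∃ k, 1 ≤ k ∧ n ∈ W k
  · obtain ⟨k, hk, hW⟩ := h
    rw [hB.blockAnchor_of_mem_W hk hW]
    exact ((hB.mem_W_iff hk).1 hW).1.le
  · rw [blockAnchor_of_forall_notMem_W fun k hk hW => h ⟨k, hk, hW⟩]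

lemma one_le_blockAnchor (hB : IsBlockPartition V W) (hn : 1 ≤ n) : 1 ≤ blockAnchor V W n := by
  by_cases h : ∃ k, 1 ≤ k ∧ n ∈ W k
  · obtain ⟨k, hk, hW⟩ := h
    rw [hB.blockAnchor_of_mem_W hk hW]
    exact (hB.one_le_sInf_V hk).trans (hB.sInf_V_le_sSup_V hk)
  · rwa [blockAnchor_of_forall_notMem_W fun k hk hW => h ⟨k, hk, hW⟩]

lemma sSup_V_mem_V (hB : IsBlockPartition V W) (hk : 1 ≤ k) : sSup (V k) ∈ V k :=
  (hB.mem_V_iff hk).2 ⟨hB.sInf_V_le_sSup_V hk, le_rfl⟩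

lemma blockAnchor_blockAnchor (hB : IsBlockPartition V W) (n : ℕ) :
    blockAnchor V W (blockAnchor V W n) = blockAnchor V W n := by
  by_cases h : ∃ k, 1 ≤ k ∧ n ∈ W k
  · obtain ⟨k, hk, hW⟩ := h
    rw [hB.blockAnchor_of_mem_W hk hW, hB.blockAnchor_of_mem_V hk (hB.sSup_V_mem_V hk)]
  · rw [blockAnchor_of_forall_notMem_W fun k hk hW => h ⟨k, hk, hW⟩,
      blockAnchor_of_forall_notMem_W fun k hk hW => h ⟨k, hk, hW⟩]

variable {M : Type*} [CommMonoid M] (g : ℕ → M)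

lemma prod_filter_eq_mul_of_mem_V (hB : IsBlockPartition V W) (hk : 1 ≤ k) (hn : n ∈ V k) :
    ∏ i ∈ (Finset.Icc 1 n).filter (fun i => blockAnchor V W i = i), g i =
      (∏ i ∈ (Finset.Icc 1 (sInf (V k) - 1)).filter (fun i => blockAnchor V W i = i), g i) *
        ∏ i ∈ Finset.Icc (sInf (V k)) n, g i := by
  have := (hB.mem_V_iff hk).1 hn
  have := hB.one_le_sInf_V hk
  have hIoc : Finset.Ioc (sInf (V k) - 1) n = Finset.Icc (sInf (V k)) n := by
    ext i
    simp only [Finset.mem_Ioc, Finset.mem_Icc]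
    omega
  rw [← prod_filter_Icc_one_mul_prod_filter_Ioc _ g (m := sInf (V k) - 1) (by omega), hIoc,
    Finset.filter_true_of_mem fun i hi => hB.blockAnchor_of_mem_V hk <|
      (hB.mem_V_iff hk).2 ⟨(Finset.mem_Icc.1 hi).1, by linarith [(Finset.mem_Icc.1 hi).2]⟩]

lemma prod_filter_eq_prod_filter_sSup_V (hB : IsBlockPartition V W) (hk : 1 ≤ k) (hn : n ∈ W k) :
    ∏ i ∈ (Finset.Icc 1 n).filter (fun i => blockAnchor V W i = i), g i =
      ∏ i ∈ (Finset.Icc 1 (sSup (V k))).filter (fun i => blockAnchor V W i = i), g i := by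
  have hnW := (hB.mem_W_iff hk).1 hn
  have hfree : (Finset.Ioc (sSup (V k)) n).filter (fun i => blockAnchor V W i = i) = ∅ := by
    refine Finset.filter_false_of_mem fun i hi => ?_
    rw [Finset.mem_Ioc] at hi
    rw [hB.blockAnchor_of_mem_W hk ((hB.mem_W_iff hk).2 ⟨hi.1, by omega⟩)]
    exact hi.1.ne
  rw [← prod_filter_Icc_one_mul_prod_filter_Ioc _ g hnW.1.le, hfree, Finset.prod_empty, mul_one]

lemma prod_filter_sInf_V_succ_sub_one (hB : IsBlockPartition V W) (k : ℕ) :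
    ∏ i ∈ (Finset.Icc 1 (sInf (V (k + 1)) - 1)).filter (fun i => blockAnchor V W i = i), g i =
      ∏ m ∈ Finset.Icc 1 k, ∏ i ∈ Finset.Icc (sInf (V m)) (sSup (V m)), g i := by
  induction k with
  | zero => simp [hB.sInf_V_one]
  | succ k ih =>
    have hWk : sSup (W (k + 1)) ∈ W (k + 1) :=
      (hB.mem_W_iff (by omega)).2 ⟨hB.sSup_V_lt_sSup_W (by omega), le_rfl⟩
    rw [← hB.sSup_W_add_one (k + 1) (by omega), Nat.add_sub_cancel,
      hB.prod_filter_eq_prod_filter_sSup_V g (by omega) hWk,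
      hB.prod_filter_eq_mul_of_mem_V g (by omega) (hB.sSup_V_mem_V (by omega)), ih,
      Finset.prod_Icc_succ_top (by omega)]

lemma prod_filter_of_mem_W (hB : IsBlockPartition V W) (hk : 1 ≤ k) (hn : n ∈ W k) :
    ∏ i ∈ (Finset.Icc 1 n).filter (fun i => blockAnchor V W i = i), g i =
      ∏ m ∈ Finset.Icc 1 k, ∏ i ∈ Finset.Icc (sInf (V m)) (sSup (V m)), g i := by
  obtain ⟨k, rfl⟩ := Nat.exists_eq_add_of_le' hk
  rw [hB.prod_filter_eq_prod_filter_sSup_V g hk hn,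
    hB.prod_filter_eq_mul_of_mem_V g hk (hB.sSup_V_mem_V hk), hB.prod_filter_sInf_V_succ_sub_one,
    Finset.prod_Icc_succ_top (by omega)]

variable {L : ℕ → Finset ℕ}

lemma anchoredCF_mem_Lam (hB : IsBlockPartition V W) (hL : ∀ n, 1 ≤ n → ∀ x ∈ L n, 1 ≤ x)
    {ω : ℕ → ℕ} (hω : ∀ i, 1 ≤ i → ω i ∈ L i) : anchoredCF (blockAnchor V W) ω ∈ Lam V W L := by
  have hpq : ∀ i, 1 ≤ i → pq (anchoredCF (blockAnchor V W) ω) i =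
      ω (blockAnchor V W i) + (i - blockAnchor V W i) := fun i hi =>
    pq_anchoredCF hi (hL _ (hB.one_le_blockAnchor hi) _ (hω _ (hB.one_le_blockAnchor hi)))
  refine ⟨cfLim_mem_Ioo _, irrational_cfLim _, fun k hk n hn => ?_, fun k hk n hn => ?_⟩
  · have hn1 := (hB.one_le_sInf_V hk).trans ((hB.mem_V_iff hk).1 hn).1
    rw [hpq n hn1, hB.blockAnchor_of_mem_V hk hn, Nat.sub_self, add_zero]
    exact hω n hn1
  · have hs1 := (hB.one_le_sInf_V hk).trans (hB.sInf_V_le_sSup_V hk)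
    have hsn := ((hB.mem_W_iff hk).1 hn).1
    rw [hpq n (by omega), hpq _ hs1, hB.blockAnchor_of_mem_W hk hn,
      hB.blockAnchor_of_mem_V hk (hB.sSup_V_mem_V hk), Nat.sub_self, add_zero]

lemma apply_eq_apply_blockAnchor_add (hB : IsBlockPartition V W) {x : ℝ} {n : ℕ} {a : ℕ → ℕ}
    (hx : x ∈ cyl n a ∩ Lam V W L) (i : ℕ) (hi : i ∈ Finset.Icc 1 n) :
    a i = a (blockAnchor V W i) + (i - blockAnchor V W i) := by
  rw [Finset.mem_Icc] at hi
  by_cases h : ∃ k, 1 ≤ k ∧ i ∈ W k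
  · obtain ⟨k, hk, hW⟩ := h
    have hs1 := (hB.one_le_sInf_V hk).trans (hB.sInf_V_le_sSup_V hk)
    have hsi := ((hB.mem_W_iff hk).1 hW).1
    rw [hB.blockAnchor_of_mem_W hk hW, ← hx.1.2 i hi.1 hi.2, ← hx.1.2 _ hs1 (by omega)]
    exact hx.2.2.2.2 k hk i hW
  · rw [blockAnchor_of_forall_notMem_W fun k hk hW => h ⟨k, hk, hW⟩, Nat.sub_self, add_zero]

lemma apply_mem_of_blockAnchor_eq (hB : IsBlockPartition V W) {x : ℝ} {n : ℕ} {a : ℕ → ℕ}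
    (hx : x ∈ cyl n a ∩ Lam V W L) {i : ℕ} (hi : i ∈ Finset.Icc 1 n)
    (hfree : blockAnchor V W i = i) : a i ∈ L i := by
  rw [Finset.mem_Icc] at hi
  obtain ⟨k, hk, hV⟩ := (hB.blockAnchor_eq_self_iff hi.1).1 hfree
  rw [← hx.1.2 i hi.1 hi.2]
  exact hx.2.2.2.1 k hk i hV

lemma map_anchoredCF_Lam (hB : IsBlockPartition V W) (hL : ∀ n, 1 ≤ n → ∀ x ∈ L n, 1 ≤ x)
    {ν : Measure (ℕ → ℕ)} [IsProbabilityMeasure ν] (hν : ∀ᵐ ω ∂ν, ∀ i, 1 ≤ i → ω i ∈ L i) :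
    ν.map (anchoredCF (blockAnchor V W)) (Lam V W L) = 1 := by
  have hΦ := (measurable_anchoredCF (anchor := blockAnchor V W)).aemeasurable (μ := ν)
  have := Measure.isProbabilityMeasure_map hΦ
  have hnull : ν (anchoredCF (blockAnchor V W) ⁻¹' Lam V W L)ᶜ = 0 :=
    ae_iff.1 (hν.mono fun ω hω => hB.anchoredCF_mem_Lam hL hω)
  refine le_antisymm prob_le_one ?_
  calc 1 = ν (anchoredCF (blockAnchor V W) ⁻¹' Lam V W L) :=
        ((measure_congr (ae_eq_univ.2 hnull)).trans measure_univ).symm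
    _ ≤ _ := Measure.le_map_apply hΦ _

end IsBlockPartition

/-- Lemma 2.6(a): existence of a Borel probability measure giving full measure to `Λ`
and with the prescribed values on fundamental intervals meeting `Λ`. -/
theorem stmt12 (V W : ℕ → Set ℕ) (L : ℕ → Finset ℕ)
    (hV : ∀ k : ℕ, 1 ≤ k → ∃ a b : ℕ, 1 ≤ a ∧ a ≤ b ∧ V k = Set.Icc a b)
    (hW : ∀ k : ℕ, 1 ≤ k → ∃ a b : ℕ, 1 ≤ a ∧ a ≤ b ∧ W k = Set.Icc a b)
    (hVW : ∀ k : ℕ, 1 ≤ k → sSup (V k) + 1 = sInf (W k))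
    (hWV : ∀ k : ℕ, 1 ≤ k → sSup (W k) + 1 = sInf (V (k + 1)))
    (hpart : (⋃ k ∈ Set.Ici 1, (V k ∪ W k)) = {n : ℕ | 1 ≤ n})
    (hL : ∀ n : ℕ, 1 ≤ n → ∃ a b : ℕ, 1 ≤ a ∧ a ≤ b ∧ (L n : Set ℕ) = Set.Icc a b) :
    ∃ μ : MeasureTheory.Measure ℝ, MeasureTheory.IsProbabilityMeasure μ ∧
      μ (Lam V W L) = 1 ∧
      ∀ n : ℕ, 1 ≤ n → ∀ a : ℕ → ℕ, (∀ i : ℕ, 1 ≤ i → i ≤ n → 1 ≤ a i) →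
        (cyl n a ∩ Lam V W L).Nonempty →
        ((n ∈ V 1 →
            μ (cyl n a) = ∏ i ∈ Finset.Icc 1 n, (1 / ((L i).card : ℝ≥0∞))) ∧
         (∀ k : ℕ, 1 ≤ k → n ∈ W k →
            μ (cyl n a) = ∏ m ∈ Finset.Icc 1 k,
              ∏ i ∈ Finset.Icc (sInf (V m)) (sSup (V m)), (1 / ((L i).card : ℝ≥0∞))) ∧
         (∀ k : ℕ, 1 ≤ k → n ∈ V (k + 1) →
            μ (cyl n a) = (∏ m ∈ Finset.Icc 1 k,
                ∏ i ∈ Finset.Icc (sInf (V m)) (sSup (V m)), (1 / ((L i).card : ℝ≥0∞))) *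
              ∏ i ∈ Finset.Icc (sInf (V (k + 1))) n, (1 / ((L i).card : ℝ≥0∞)))) := by
  have hB : IsBlockPartition V W := ⟨hV, hW, hVW, hWV, hpart⟩
  have hLpos : ∀ n, 1 ≤ n → ∀ x ∈ L n, 1 ≤ x := fun n hn x hx => by
    obtain ⟨a, b, ha, -, hLn⟩ := hL n hn
    exact ha.trans (hLn ▸ Finset.mem_coe.2 hx : x ∈ Icc a b).1
  have hLne : ∀ n, 1 ≤ n → (L n).Nonempty := fun n hn => by
    obtain ⟨a, b, -, hab, hLn⟩ := hL n hn
    exact ⟨a, Finset.mem_coe.1 (hLn ▸ ⟨le_rfl, hab⟩ : a ∈ (L n : Set ℕ))⟩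
  set ν := Measure.infinitePi fun i => uniformOrDirac (L i)
  have hν : ∀ᵐ ω ∂ν, ∀ i, 1 ≤ i → ω i ∈ L i :=
    ae_infinitePi_forall fun i => eventually_imp_distrib_left.2 fun hi =>
      ae_uniformOrDirac_mem (hLne i hi)
  refine ⟨ν.map (anchoredCF (blockAnchor V W)),
    Measure.isProbabilityMeasure_map measurable_anchoredCF.aemeasurable,
    hB.map_anchoredCF_Lam hLpos hν, ?_⟩
  rintro n - a - ⟨x, hx⟩
  have hμ : ν.map (anchoredCF (blockAnchor V W)) (cyl n a) =
      ∏ i ∈ (Finset.Icc 1 n).filter (fun i => blockAnchor V W i = i),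
        1 / ((L i).card : ℝ≥0∞) := by
    rw [infinitePi_map_anchoredCF_cyl hB.blockAnchor_le (fun _ => hB.one_le_blockAnchor)
      hB.blockAnchor_blockAnchor (hν.mono fun ω hω i hi => hLpos i hi _ (hω i hi))
      (hB.apply_eq_apply_blockAnchor_add hx)]
    exact Finset.prod_congr rfl fun i hi => uniformOrDirac_singleton <|
      hB.apply_mem_of_blockAnchor_eq hx (Finset.mem_filter.1 hi).1 (Finset.mem_filter.1 hi).2
  rw [hμ]
  refine ⟨fun hn1 => ?_, fun k hk hnW => hB.prod_filter_of_mem_W _ hk hnW, fun k _ hnV => ?_⟩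
  · simp [hB.prod_filter_eq_mul_of_mem_V _ le_rfl hn1, hB.sInf_V_one]
  · rw [hB.prod_filter_eq_mul_of_mem_V _ (by omega) hnV, hB.prod_filter_sInf_V_succ_sub_one]
end

section
/- Let t ≥ 2 be an integer. For integers 1 ≤ m ≤ n define R_t(m,n) = (∑_{i=m}^{n} log((2i+1)^t − (2i)^t)) / (2t ∑_{i=m}^{n} log(2i+1)). Then lim_{m→∞} inf_{n ≥ m} R_t(m,n) = (t−1)/(2t). -/
/-!
Write `L i = log (2i+1)` and `A i = log ((2i+1)^t - (2i)^t)`. Since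
`(y+1)^(t-1) ≤ (y+1)^t - y^t ≤ t (y+1)^(t-1)` for `y ≥ 0`, every term satisfies
`(t-1) L i ≤ A i ≤ log t + (t-1) L i`. The lower bound gives `R_t(m,n) ≥ (t-1)/(2t)` for all
`n ≥ m ≥ 1`, while the upper bound at `n = m` gives `R_t(m,m) ≤ (t-1)/(2t) + log t / (2t L m)`,
which tends to `(t-1)/(2t)` because `L m → ∞`.
-/

open Filter Finset Real Topology

section PowSubPow

variable {α : Type*} [CommRing α] [LinearOrder α] [IsStrictOrderedRing α] {y : α}

lemma add_one_pow_pred_le_add_one_pow_sub_pow (hy : 0 ≤ y) {t : ℕ} (ht : 1 ≤ t) :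
    (y + 1) ^ (t - 1) ≤ (y + 1) ^ t - y ^ t := by
  obtain ⟨s, rfl⟩ := Nat.exists_eq_add_of_le' ht
  have hpow : y ^ s * y ≤ (y + 1) ^ s * y :=
    mul_le_mul_of_nonneg_right (pow_le_pow_left₀ hy (le_add_of_nonneg_right zero_le_one) s) hy
  rw [Nat.add_sub_cancel, pow_succ, pow_succ]
  linarith

lemma add_one_pow_sub_pow_le (hy : 0 ≤ y) (t : ℕ) :
    (y + 1) ^ t - y ^ t ≤ t * (y + 1) ^ (t - 1) := by
  have hmax : max |y + 1| |y| = y + 1 := by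
    rw [abs_of_nonneg hy, abs_of_nonneg (by linarith), max_eq_left (by linarith)]
  simpa [hmax] using (le_abs_self _).trans (abs_pow_sub_pow_le (y + 1) y t)

end PowSubPow

lemma cast_succ_pow_sub_pow (t a : ℕ) :
    (((a + 1) ^ t - a ^ t : ℕ) : ℝ) = ((a : ℝ) + 1) ^ t - (a : ℝ) ^ t := by
  rw [Nat.cast_sub (Nat.pow_le_pow_left a.le_succ t)]
  push_cast
  ring

section LogSuccPowSubPow

variable {t : ℕ}

lemma log_succ_pow_sub_pow_ge (ht : 1 ≤ t) (a : ℕ) :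
    ((t : ℝ) - 1) * log ((a + 1 : ℕ) : ℝ) ≤ log (((a + 1) ^ t - a ^ t : ℕ) : ℝ) := by
  rw [← Nat.cast_pred ht, ← log_pow, cast_succ_pow_sub_pow]
  push_cast
  exact log_le_log (by positivity) (add_one_pow_pred_le_add_one_pow_sub_pow a.cast_nonneg ht)

lemma log_succ_pow_sub_pow_le (ht : 1 ≤ t) (a : ℕ) :
    log (((a + 1) ^ t - a ^ t : ℕ) : ℝ) ≤ log t + ((t : ℝ) - 1) * log ((a + 1 : ℕ) : ℝ) := by
  have hpos : 0 < ((a : ℝ) + 1) ^ t - (a : ℝ) ^ t :=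
    (pow_pos (by positivity) _).trans_le (add_one_pow_pred_le_add_one_pow_sub_pow a.cast_nonneg ht)
  rw [← Nat.cast_pred ht, ← log_pow, ← log_mul (by positivity) (by positivity),
    cast_succ_pow_sub_pow]
  push_cast
  exact log_le_log hpos (add_one_pow_sub_pow_le a.cast_nonneg t)

lemma tendsto_log_succ_pow_sub_pow_div_log (ht : 1 ≤ t) :
    Tendsto (fun a : ℕ => log (((a + 1) ^ t - a ^ t : ℕ) : ℝ) / log ((a + 1 : ℕ) : ℝ))
      atTop (𝓝 ((t : ℝ) - 1)) := by
  have hlog : Tendsto (fun a : ℕ => log ((a + 1 : ℕ) : ℝ)) atTop atTop :=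
    tendsto_log_atTop.comp (tendsto_natCast_atTop_atTop.comp (tendsto_add_atTop_nat 1))
  have hupper : Tendsto (fun a : ℕ => ((t : ℝ) - 1) + log t * (log ((a + 1 : ℕ) : ℝ))⁻¹)
      atTop (𝓝 ((t : ℝ) - 1)) := by
    simpa using tendsto_const_nhds.add (hlog.inv_tendsto_atTop.const_mul (log t))
  refine tendsto_of_tendsto_of_tendsto_of_le_of_le' tendsto_const_nhds hupper ?_ ?_ <;>
    filter_upwards [hlog.eventually_gt_atTop 0] with a ha
  · rw [le_div_iff₀ ha]
    exact log_succ_pow_sub_pow_ge ht a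
  · rw [div_le_iff₀ ha, add_mul, mul_assoc, inv_mul_cancel₀ ha.ne', mul_one]
    linarith [log_succ_pow_sub_pow_le ht a]

end LogSuccPowSubPow

lemma le_sum_div_sum {ι : Type*} {s : Finset ι} {a b : ι → ℝ} {k : ℝ} (hs : s.Nonempty)
    (hb : ∀ i ∈ s, 0 < b i) (hab : ∀ i ∈ s, k * b i ≤ a i) :
    k ≤ (∑ i ∈ s, a i) / ∑ i ∈ s, b i := by
  rw [le_div_iff₀ (sum_pos hb hs), mul_sum]
  exact sum_le_sum hab

lemma tendsto_iInf_Ici_of_tendsto_diag {α β : Type*} [ConditionallyCompleteLinearOrder α]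
    [TopologicalSpace α] [OrderTopology α] [Preorder β] {l : Filter β} {f : β → β → α} {c : α}
    (hlow : ∀ᶠ m in l, ∀ n, m ≤ n → c ≤ f m n) (hdiag : Tendsto (fun m => f m m) l (𝓝 c)) :
    Tendsto (fun m => ⨅ n : Set.Ici m, f m n) l (𝓝 c) := by
  refine tendsto_of_tendsto_of_tendsto_of_le_of_le' tendsto_const_nhds hdiag ?_ ?_ <;>
    filter_upwards [hlow] with m hm
  · have : Nonempty (Set.Ici m) := ⟨⟨m, le_rfl⟩⟩
    exact le_ciInf fun n => hm n n.2
  · have hbdd : BddBelow (Set.range fun n : Set.Ici m => f m n) := by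
      refine ⟨c, ?_⟩
      rintro _ ⟨n, rfl⟩
      exact hm n n.2
    exact ciInf_le hbdd ⟨m, le_rfl⟩

/-- The ratio `R_t(m,n)` of the statement. -/
noncomputable def oddPowRatio (t m n : ℕ) : ℝ :=
  (∑ i ∈ Icc m n, log ((((2 * i + 1) ^ t - (2 * i) ^ t : ℕ)) : ℝ)) /
    (2 * (t : ℝ) * ∑ i ∈ Icc m n, log (((2 * i + 1 : ℕ)) : ℝ))

section OddPowRatio

variable {t : ℕ}

lemma le_oddPowRatio (ht : 1 ≤ t) {m n : ℕ} (hm : 1 ≤ m) (hmn : m ≤ n) :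
    ((t : ℝ) - 1) / (2 * t) ≤ oddPowRatio t m n := by
  have htR : (0 : ℝ) < t := by exact_mod_cast ht
  rw [oddPowRatio, mul_sum]
  refine le_sum_div_sum (nonempty_Icc.2 hmn) (fun i hi => ?_) (fun i hi => ?_)
  · have hi1 : (1 : ℝ) < ((2 * i + 1 : ℕ) : ℝ) := by
      have := (mem_Icc.1 hi).1
      exact_mod_cast (by omega : 1 < 2 * i + 1)
    exact mul_pos (by positivity) (log_pos hi1)
  · calc ((t : ℝ) - 1) / (2 * t) * (2 * t * log ((2 * i + 1 : ℕ) : ℝ))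
        = ((t : ℝ) - 1) * log ((2 * i + 1 : ℕ) : ℝ) := by field_simp
      _ ≤ _ := log_succ_pow_sub_pow_ge ht (2 * i)

lemma tendsto_oddPowRatio_diag (ht : 1 ≤ t) :
    Tendsto (fun m => oddPowRatio t m m) atTop (𝓝 (((t : ℝ) - 1) / (2 * t))) := by
  have hlim := ((tendsto_log_succ_pow_sub_pow_div_log ht).comp
    (tendsto_id.const_mul_atTop' two_pos)).div_const (2 * (t : ℝ))
  simpa only [oddPowRatio, Icc_self, sum_singleton, div_mul_eq_div_div_swap, Function.comp_def,
    id] using hlim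

end OddPowRatio

/-- The limit `B_k → (t-1)/(2t)` used in Lemmas 4.2 and 4.7: with
`R_t(m,n) = (∑_{i=m}^n log((2i+1)^t - (2i)^t)) / (2t ∑_{i=m}^n log(2i+1))`,
one has `inf_{n ≥ m} R_t(m,n) → (t-1)/(2t)` as `m → ∞`. -/
theorem stmt17 (t : ℕ) (ht : 2 ≤ t) :
    Filter.Tendsto (fun m : ℕ =>
        ⨅ n : Set.Ici m,
          (∑ i ∈ Finset.Icc m (n : ℕ),
              Real.log ((((2 * i + 1) ^ t - (2 * i) ^ t : ℕ)) : ℝ)) /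
            (2 * (t : ℝ) * ∑ i ∈ Finset.Icc m (n : ℕ),
              Real.log (((2 * i + 1 : ℕ)) : ℝ)))
      Filter.atTop (nhds (((t : ℝ) - 1) / (2 * (t : ℝ)))) := by
  have ht1 : 1 ≤ t := by omega
  show Tendsto (fun m => ⨅ n : Set.Ici m, oddPowRatio t m n) atTop _
  refine tendsto_iInf_Ici_of_tendsto_diag ?_ (tendsto_oddPowRatio_diag ht1)
  filter_upwards [eventually_ge_atTop 1] with m hm n hmn
  exact le_oddPowRatio ht1 hm hmn
end
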